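/- arXiv:1812.07112 — 4 statements merged into one kernel-verified Lean document; each statement's English description precedes it below -/
import Mathlib

section
/- For all n ≥ 0 and k ≥ 0, the number of 312-avoiding permutations of length n with exactly k peaks equals the number of 321-avoiding permutations of length n with exactly k peaks, i.e., a_{n,k}^{pk}(312) = a_{n,k}^{pk}(321). -/
open scoped Classical

/-- The word `π₁π₂⋯π_n` of a permutation of `{1,…,n}`, with values in `{1,…,n}`. -/
def permWord {n : ℕ} (π : Equiv.Perm (Fin n)) : List ℕ :=
  List.ofFn fun i => (π i : ℕ) + 1

/-- The word `l` contains the word `ρ` as a (classical) pattern. -/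
def ContainsPat (l ρ : List ℕ) : Prop :=
  ∃ f : Fin ρ.length → Fin l.length, StrictMono f ∧
    ∀ a b : Fin ρ.length, ρ.get a < ρ.get b ↔ l.get (f a) < l.get (f b)

/-- `l` avoids every pattern in the list `B`. -/
def AvoidsAll (l : List ℕ) (B : List (List ℕ)) : Prop :=
  ∀ ρ ∈ B, ¬ ContainsPat l ρ

/-- Number of ascents of the word `l`. -/
def ascents (l : List ℕ) : ℕ :=
  ((Finset.range (l.length - 1)).filter fun i => l.getD i 0 < l.getD (i + 1) 0).card

/-- Number of descents of the word `l`. -/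
def descents (l : List ℕ) : ℕ :=
  ((Finset.range (l.length - 1)).filter fun i => l.getD (i + 1) 0 < l.getD i 0).card

/-- Number of double ascents of the word `l`. -/
def dascents (l : List ℕ) : ℕ :=
  ((Finset.range (l.length - 2)).filter fun i =>
    l.getD i 0 < l.getD (i + 1) 0 ∧ l.getD (i + 1) 0 < l.getD (i + 2) 0).card

/-- Number of double descents of the word `l`. -/
def ddescents (l : List ℕ) : ℕ :=
  ((Finset.range (l.length - 2)).filter fun i =>
    l.getD (i + 1) 0 < l.getD i 0 ∧ l.getD (i + 2) 0 < l.getD (i + 1) 0).card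

/-- Number of peaks of the word `l`. -/
def peaks (l : List ℕ) : ℕ :=
  ((Finset.range (l.length - 2)).filter fun i =>
    l.getD i 0 < l.getD (i + 1) 0 ∧ l.getD (i + 2) 0 < l.getD (i + 1) 0).card

/-- Number of valleys of the word `l`. -/
def valleys (l : List ℕ) : ℕ :=
  ((Finset.range (l.length - 2)).filter fun i =>
    l.getD (i + 1) 0 < l.getD i 0 ∧ l.getD (i + 1) 0 < l.getD (i + 2) 0).card

/-- `acount n k stat B` is the number of permutations of `{1,…,n}` avoiding all
patterns in `B` whose statistic `stat` equals `k`. -/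
noncomputable def acount (n k : ℕ) (stat : List ℕ → ℕ) (B : List (List ℕ)) : ℕ :=
  (Finset.univ.filter fun π : Equiv.Perm (Fin n) =>
    AvoidsAll (permWord π) B ∧ stat (permWord π) = k).card

/-!
A 312-avoiding and a 321-avoiding permutation are both determined by their records
(left-to-right maxima, with positions and values) and the set of remaining values: in a
321-avoider the remaining values appear in increasing order, while in a 312-avoider each
remaining position receives the largest unused value below the current maximum. Any permutation
can be refilled in either way without changing its records, because the sorted remaining values
still lie termwise below the prefix maxima at their positions; this gives a bijection between
the two classes (in the spirit of Simion and Schmidt). In both classes every peak is a record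
followed by a non-record, so the number of peaks is read off the records and is preserved.
-/

namespace List

variable {α : Type*} [LinearOrder α]

theorem forall₂_le_orderedInsert {x c : α} {s b : List α} (hx : x ≤ c)
    (h : Forall₂ (· ≤ ·) s b) (hb : (c :: b).Pairwise (· ≤ ·)) :
    Forall₂ (· ≤ ·) (s.orderedInsert (· ≤ ·) x) (c :: b) := by
  induction h generalizing c with
  | nil => exact .cons hx .nil
  | @cons s₀ b₀ s b h₀ h ih =>
    rw [orderedInsert_cons]
    split_ifs with hxs
    · exact .cons hx (.cons h₀ h)
    · exact .cons ((not_le.mp hxs).le.trans hx)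
        (ih (hx.trans (rel_of_pairwise_cons hb mem_cons_self)) hb.of_cons)

theorem Forall₂.insertionSort_le {s b : List α} (h : Forall₂ (· ≤ ·) s b)
    (hb : b.Pairwise (· ≤ ·)) : Forall₂ (· ≤ ·) (s.insertionSort (· ≤ ·)) b := by
  induction h with
  | nil => exact .nil
  | cons h₀ _ ih => exact forall₂_le_orderedInsert h₀ (ih hb.of_cons) hb

theorem Forall₂.erase_of_le {x c : α} {s b : List α} (hs : s.Pairwise (· ≤ ·))
    (h : Forall₂ (· ≤ ·) s (c :: b)) (hb : (c :: b).Pairwise (· ≤ ·)) (hx : x ∈ s)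
    (hxc : x ≤ c) : Forall₂ (· ≤ ·) (s.erase x) b := by
  induction s generalizing c b with
  | nil => simp at hx
  | cons s₀ s ih =>
    obtain ⟨h₀, h⟩ := forall₂_cons.mp h
    by_cases hsx : s₀ = x
    · simpa [hsx] using h
    have hx : x ∈ s := (mem_cons.mp hx).resolve_left (Ne.symm hsx)
    obtain ⟨b₀, b, rfl⟩ : ∃ b₀ b', b = b₀ :: b' := by
      cases h with
      | nil => simp at hx
      | cons => exact ⟨_, _, rfl⟩
    have hcb₀ : c ≤ b₀ := rel_of_pairwise_cons hb mem_cons_self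
    rw [erase_cons_tail (by simpa using hsx)]
    exact .cons ((rel_of_pairwise_cons hs hx).trans (hxc.trans hcb₀))
      (ih hs.of_cons h hb.of_cons hx (hxc.trans hcb₀))

end List

section Patterns

open List

def ContainsTriple (P : ℕ → ℕ → ℕ → Prop) (l : List ℕ) : Prop :=
  ∃ x y z, [x, y, z] <+ l ∧ P x y z

theorem containsPat_iff_exists_sublist {l ρ : List ℕ} :
    ContainsPat l ρ ↔ ∃ s, s <+ l ∧ ∃ h : s.length = ρ.length,
      ∀ a b : Fin ρ.length, ρ.get a < ρ.get b ↔ s.get (a.cast h.symm) < s.get (b.cast h.symm) := by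
  constructor
  · rintro ⟨f, hf, hρ⟩
    refine ⟨ofFn (l.get ∘ f), sublist_iff_exists_fin_orderEmbedding_get_eq.mpr
      ⟨(Fin.castOrderIso length_ofFn).toOrderEmbedding.trans (OrderEmbedding.ofStrictMono f hf),
        fun i => by simp; rfl⟩, length_ofFn, fun a b => by simpa using hρ a b⟩
  · rintro ⟨s, hs, h, hρ⟩
    obtain ⟨g, hg⟩ := sublist_iff_exists_fin_orderEmbedding_get_eq.mp hs
    refine ⟨g ∘ Fin.cast h.symm, g.strictMono.comp (Fin.castOrderIso h.symm).strictMono,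
      fun a b => ?_⟩
    simpa only [Function.comp, ← hg] using hρ a b

theorem containsPat_312_iff {l : List ℕ} :
    ContainsPat l [3, 1, 2] ↔ ContainsTriple (fun x y z => y < z ∧ z < x) l := by
  rw [containsPat_iff_exists_sublist]
  constructor
  · rintro ⟨s, hs, h, hρ⟩
    obtain ⟨x, y, z, rfl⟩ := length_eq_three.mp h
    exact ⟨x, y, z, hs, (hρ 1 2).mp (by decide), (hρ 2 0).mp (by decide)⟩
  · rintro ⟨x, y, z, hs, hyz, hzx⟩
    refine ⟨_, hs, rfl, fun a b => ?_⟩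
    fin_cases a <;> fin_cases b <;> simp <;> omega

theorem containsPat_321_iff {l : List ℕ} :
    ContainsPat l [3, 2, 1] ↔ ContainsTriple (fun x y z => z < y ∧ y < x) l := by
  rw [containsPat_iff_exists_sublist]
  constructor
  · rintro ⟨s, hs, h, hρ⟩
    obtain ⟨x, y, z, rfl⟩ := length_eq_three.mp h
    exact ⟨x, y, z, hs, (hρ 2 1).mp (by decide), (hρ 1 0).mp (by decide)⟩
  · rintro ⟨x, y, z, hs, hzy, hyx⟩
    refine ⟨_, hs, rfl, fun a b => ?_⟩
    fin_cases a <;> fin_cases b <;> simp <;> omega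

variable {P : ℕ → ℕ → ℕ → Prop} {l : List ℕ}

theorem ContainsTriple.mono {l' : List ℕ} (h : ContainsTriple P l) (hl : l <+ l') :
    ContainsTriple P l' :=
  let ⟨x, y, z, hs, hP⟩ := h
  ⟨x, y, z, hs.trans hl, hP⟩

theorem containsTriple_cons_zero (hP : ∀ {x y z}, P x y z → y < x) :
    ContainsTriple P (0 :: l) ↔ ContainsTriple P l := by
  refine ⟨fun ⟨x, y, z, hs, hxyz⟩ => ?_, fun h => h.mono (sublist_cons_self 0 l)⟩
  rcases sublist_cons_iff.mp hs with hs | ⟨r, hr, -⟩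
  · exact ⟨x, y, z, hs, hxyz⟩
  · obtain ⟨rfl, -⟩ := cons_eq_cons.mp hr
    exact absurd (hP hxyz) (Nat.not_lt_zero y)

theorem containsTriple_cons_cons_of_lt (hmono : ∀ {x x' y z}, P x y z → x ≤ x' → P x' y z)
    (hP : ∀ {x y z}, P x y z → y < x) {m h : ℕ} (hmh : m < h) :
    ContainsTriple P (m :: h :: l) ↔ ContainsTriple P (h :: l) := by
  refine ⟨fun ⟨x, y, z, hs, hxyz⟩ => ?_, fun hl => hl.mono (sublist_cons_self m _)⟩
  rcases sublist_cons_iff.mp hs with hs | ⟨r, hr, hs⟩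
  · exact ⟨x, y, z, hs, hxyz⟩
  obtain ⟨rfl, rfl⟩ := cons_eq_cons.mp hr
  rcases sublist_cons_iff.mp hs with hs | ⟨r, hr, -⟩
  · exact ⟨h, y, z, hs.cons_cons h, hmono hxyz hmh.le⟩
  · obtain ⟨rfl, -⟩ := cons_eq_cons.mp hr
    exact absurd (hP hxyz) (by omega)

theorem containsTriple_cons_cons_of_le (hmono : ∀ {x x' y z}, P x y z → x ≤ x' → P x' y z)
    {m h : ℕ} (hhm : h ≤ m) :
    ContainsTriple P (m :: h :: l) ↔ (∃ z ∈ l, P m h z) ∨ ContainsTriple P (m :: l) := by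
  constructor
  · rintro ⟨x, y, z, hs, hxyz⟩
    rcases sublist_cons_iff.mp hs with hs | ⟨r, hr, hs⟩
    · rcases sublist_cons_iff.mp hs with hs | ⟨r, hr, hs⟩
      · exact .inr ⟨x, y, z, hs.cons m, hxyz⟩
      · obtain ⟨rfl, rfl⟩ := cons_eq_cons.mp hr
        exact .inr ⟨m, y, z, hs.cons_cons m, hmono hxyz hhm⟩
    · obtain ⟨rfl, rfl⟩ := cons_eq_cons.mp hr
      rcases sublist_cons_iff.mp hs with hs | ⟨r, hr, hs⟩
      · exact .inr ⟨x, y, z, hs.cons_cons x, hxyz⟩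
      · obtain ⟨rfl, rfl⟩ := cons_eq_cons.mp hr
        exact .inl ⟨z, singleton_sublist.mp hs, hxyz⟩
  · rintro (⟨z, hz, hP⟩ | hl)
    · exact ⟨m, h, z, ((singleton_sublist.mpr hz).cons_cons h).cons_cons m, hP⟩
    · exact hl.mono ((sublist_cons_self h l).cons_cons m)

end Patterns

theorem peaks_cons_cons_cons (a b c : ℕ) (t : List ℕ) :
    peaks (a :: b :: c :: t) = (if a < b ∧ c < b then 1 else 0) + peaks (b :: c :: t) := by
  simp only [peaks, Finset.card_filter, List.length_cons]
  rw [show t.length + 1 + 1 + 1 - 2 = t.length + 1 by omega,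
    show t.length + 1 + 1 - 2 = t.length by omega, Finset.sum_range_succ', add_comm]
  simp

namespace LRMax

open List

/- Throughout, a word `w` is read after an imagined prefix whose maximum is the seed `m`;
the records of `w` are its entries exceeding everything before them, and the other positions
are holes. `bounds m w` lists the prefix maximum at each hole. -/

def skeleton : ℕ → List ℕ → List (Option ℕ)
  | _, [] => []
  | m, h :: t => if m < h then some h :: skeleton h t else none :: skeleton m t

def nonRecords : ℕ → List ℕ → List ℕ
  | _, [] => []
  | m, h :: t => if m < h then nonRecords h t else h :: nonRecords m t

def bounds : ℕ → List ℕ → List ℕ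
  | _, [] => []
  | m, h :: t => if m < h then bounds h t else m :: bounds m t

def fillHoles : List (Option ℕ) → List ℕ → List ℕ
  | [], _ => []
  | some v :: s, a => v :: fillHoles s a
  | none :: _, [] => []
  | none :: s, x :: a => x :: fillHoles s a

variable {m : ℕ} {w a : List ℕ}

theorem nonRecords_sublist (m : ℕ) (w : List ℕ) : nonRecords m w <+ w := by
  induction w generalizing m with
  | nil => exact .slnil
  | cons h t ih =>
    unfold nonRecords
    split_ifs
    · exact (ih h).cons h
    · exact (ih m).cons_cons h

theorem mem_nonRecords_of_le {z : ℕ} (hz : z ∈ w) (hzm : z ≤ m) : z ∈ nonRecords m w := by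
  induction w generalizing m with
  | nil => simp at hz
  | cons h t ih =>
    unfold nonRecords
    split_ifs with hm
    · rcases mem_cons.mp hz with rfl | hz
      · omega
      · exact ih hz (by omega)
    · rcases mem_cons.mp hz with rfl | hz
      · exact mem_cons_self
      · exact mem_cons_of_mem _ (ih hz hzm)

theorem perm_nonRecords_append_reduceOption (m : ℕ) (w : List ℕ) :
    w ~ nonRecords m w ++ (skeleton m w).reduceOption := by
  induction w generalizing m with
  | nil => simp [nonRecords, skeleton]
  | cons h t ih =>
    unfold nonRecords skeleton
    split_ifs
    · rw [reduceOption_cons_of_some]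
      exact ((ih h).cons h).trans perm_middle.symm
    · rw [reduceOption_cons_of_none]
      exact (ih m).cons h

theorem perm_of_skeleton_eq {v : List ℕ} (hs : skeleton m v = skeleton m w)
    (hr : nonRecords m v ~ nonRecords m w) : v ~ w :=
  calc v ~ nonRecords m v ++ (skeleton m v).reduceOption :=
        perm_nonRecords_append_reduceOption m v
    _ ~ nonRecords m w ++ (skeleton m w).reduceOption := by rw [hs]; exact hr.append_right _
    _ ~ w := (perm_nonRecords_append_reduceOption m w).symm

theorem forall₂_nonRecords_bounds (m : ℕ) (w : List ℕ) :
    Forall₂ (· ≤ ·) (nonRecords m w) (bounds m w) := by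
  induction w generalizing m with
  | nil => exact .nil
  | cons h t ih =>
    unfold nonRecords bounds
    split_ifs with hm
    · exact ih h
    · exact .cons (not_lt.mp hm) (ih m)

theorem pairwise_cons_bounds (m : ℕ) (w : List ℕ) : (m :: bounds m w).Pairwise (· ≤ ·) := by
  induction w generalizing m with
  | nil => simp [bounds]
  | cons h t ih =>
    by_cases hm : m < h
    · simp only [bounds, hm, ↓reduceIte]
      exact pairwise_cons.mpr
        ⟨fun b hb => hm.le.trans (rel_of_pairwise_cons (ih h) hb), (ih h).of_cons⟩
    · simp only [bounds, hm, ↓reduceIte]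
      exact pairwise_cons.mpr ⟨fun b hb => (mem_cons.mp hb).elim ge_of_eq
        fun hb => rel_of_pairwise_cons (ih m) hb, ih m⟩

theorem fillHoles_skeleton_nonRecords (m : ℕ) (w : List ℕ) :
    fillHoles (skeleton m w) (nonRecords m w) = w := by
  induction w generalizing m with
  | nil => rfl
  | cons h t ih =>
    unfold skeleton nonRecords
    split_ifs <;> simp only [fillHoles, ih]

theorem skeleton_fillHoles (ha : Forall₂ (· ≤ ·) a (bounds m w)) :
    skeleton m (fillHoles (skeleton m w) a) = skeleton m w := by
  induction w generalizing m a with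
  | nil => rfl
  | cons h t ih =>
    by_cases hm : m < h
    · simp only [bounds, hm, ↓reduceIte] at ha
      simp only [skeleton, fillHoles, hm, ↓reduceIte, ih ha]
    · simp only [bounds, hm, ↓reduceIte] at ha
      obtain ⟨x, a, hxm, hrest, rfl⟩ := forall₂_cons_right_iff.mp ha
      simp only [skeleton, fillHoles, hm, not_lt.mpr hxm, ↓reduceIte, ih hrest]

theorem nonRecords_fillHoles (ha : Forall₂ (· ≤ ·) a (bounds m w)) :
    nonRecords m (fillHoles (skeleton m w) a) = a := by
  induction w generalizing m a with
  | nil => cases ha; rfl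
  | cons h t ih =>
    by_cases hm : m < h
    · simp only [bounds, hm, ↓reduceIte] at ha
      simp only [skeleton, fillHoles, nonRecords, hm, ↓reduceIte, ih ha]
    · simp only [bounds, hm, ↓reduceIte] at ha
      obtain ⟨x, a, hxm, hrest, rfl⟩ := forall₂_cons_right_iff.mp ha
      simp only [skeleton, fillHoles, nonRecords, hm, not_lt.mpr hxm, ↓reduceIte, ih hrest]

def greatestLE (m : ℕ) (a : List ℕ) : ℕ := (a.toFinset.filter (· ≤ m)).sup id

theorem le_greatestLE {y : ℕ} (hy : y ∈ a) (hym : y ≤ m) : y ≤ greatestLE m a :=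
  Finset.le_sup (f := id) (by simpa using And.intro hy hym)

theorem greatestLE_mem_and_le {y : ℕ} (hy : y ∈ a) (hym : y ≤ m) :
    greatestLE m a ∈ a ∧ greatestLE m a ≤ m := by
  obtain ⟨x, hx, hxeq⟩ := Finset.exists_mem_eq_sup (a.toFinset.filter (· ≤ m))
    ⟨y, by simpa using And.intro hy hym⟩ id
  rw [greatestLE, hxeq]
  simpa using hx

theorem greatestLE_perm {a' : List ℕ} (h : a ~ a') : greatestLE m a = greatestLE m a' := by
  rw [greatestLE, greatestLE, toFinset_eq_of_perm _ _ h]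

def fillGreedy : ℕ → List (Option ℕ) → List ℕ → List ℕ
  | _, [], _ => []
  | _, some v :: s, a => v :: fillGreedy v s a
  | m, none :: s, a => greatestLE m a :: fillGreedy m s (a.erase (greatestLE m a))

def IsGreedy : ℕ → List ℕ → Prop
  | _, [] => True
  | m, h :: t => if m < h then IsGreedy h t else
      (∀ y ∈ nonRecords m t, y ≤ h ∨ m < y) ∧ IsGreedy m t

def FitsHoles (m : ℕ) (w a : List ℕ) : Prop :=
  ∃ s, s.Pairwise (· ≤ ·) ∧ s ~ a ∧ Forall₂ (· ≤ ·) s (bounds m w)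

theorem forall₂_sort_nonRecords_bounds (m : ℕ) (w : List ℕ) :
    Forall₂ (· ≤ ·) ((nonRecords m w).insertionSort (· ≤ ·)) (bounds m w) :=
  (forall₂_nonRecords_bounds m w).insertionSort_le (pairwise_cons_bounds m w).of_cons

theorem fitsHoles_nonRecords (m : ℕ) (w : List ℕ) : FitsHoles m w (nonRecords m w) :=
  ⟨_, pairwise_insertionSort _ _, perm_insertionSort _ _, forall₂_sort_nonRecords_bounds m w⟩

theorem FitsHoles.tail_of_lt {h : ℕ} {t : List ℕ} (ha : FitsHoles m (h :: t) a) (hm : m < h) :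
    FitsHoles h t a := by
  simpa only [FitsHoles, bounds, hm, ↓reduceIte] using ha

theorem FitsHoles.exists_le {h : ℕ} {t : List ℕ} (ha : FitsHoles m (h :: t) a) (hm : ¬m < h) :
    ∃ y ∈ a, y ≤ m := by
  obtain ⟨s, -, hsa, hs⟩ := ha
  simp only [bounds, hm, ↓reduceIte] at hs
  obtain ⟨y, s, hym, -, rfl⟩ := forall₂_cons_right_iff.mp hs
  exact ⟨y, hsa.subset mem_cons_self, hym⟩

theorem FitsHoles.tail_erase {h x : ℕ} {t : List ℕ} (ha : FitsHoles m (h :: t) a)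
    (hm : ¬m < h) (hx : x ∈ a) (hxm : x ≤ m) : FitsHoles m t (a.erase x) := by
  obtain ⟨s, hsorted, hsa, hs⟩ := ha
  simp only [bounds, hm, ↓reduceIte] at hs
  exact ⟨s.erase x, hsorted.sublist (erase_sublist), hsa.erase x,
    hs.erase_of_le hsorted (pairwise_cons_bounds m t) (hsa.symm.subset hx) hxm⟩

theorem skeleton_fillGreedy (ha : FitsHoles m w a) :
    skeleton m (fillGreedy m (skeleton m w) a) = skeleton m w := by
  induction w generalizing m a with
  | nil => rfl
  | cons h t ih =>
    by_cases hm : m < h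
    · simp only [skeleton, fillGreedy, hm, ↓reduceIte, ih (ha.tail_of_lt hm)]
    · obtain ⟨y, hy, hym⟩ := ha.exists_le hm
      obtain ⟨hx, hxm⟩ := greatestLE_mem_and_le hy hym
      simp only [skeleton, fillGreedy, hm, not_lt.mpr hxm, ↓reduceIte,
        ih (ha.tail_erase hm hx hxm)]

theorem nonRecords_fillGreedy (ha : FitsHoles m w a) :
    nonRecords m (fillGreedy m (skeleton m w) a) ~ a := by
  induction w generalizing m a with
  | nil =>
    obtain ⟨s, -, hsa, hs⟩ := ha
    cases hs
    exact hsa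
  | cons h t ih =>
    by_cases hm : m < h
    · simp only [skeleton, fillGreedy, nonRecords, hm, ↓reduceIte]
      exact ih (ha.tail_of_lt hm)
    · obtain ⟨y, hy, hym⟩ := ha.exists_le hm
      obtain ⟨hx, hxm⟩ := greatestLE_mem_and_le hy hym
      simp only [skeleton, fillGreedy, nonRecords, hm, not_lt.mpr hxm, ↓reduceIte]
      exact ((ih (ha.tail_erase hm hx hxm)).cons _).trans (perm_cons_erase hx).symm

theorem isGreedy_fillGreedy (ha : FitsHoles m w a) :
    IsGreedy m (fillGreedy m (skeleton m w) a) := by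
  induction w generalizing m a with
  | nil => trivial
  | cons h t ih =>
    by_cases hm : m < h
    · simp only [skeleton, fillGreedy, IsGreedy, hm, ↓reduceIte]
      exact ih (ha.tail_of_lt hm)
    · obtain ⟨y, hy, hym⟩ := ha.exists_le hm
      obtain ⟨hx, hxm⟩ := greatestLE_mem_and_le hy hym
      have hfits := ha.tail_erase hm hx hxm
      simp only [skeleton, fillGreedy, IsGreedy, hm, not_lt.mpr hxm, ↓reduceIte]
      refine ⟨fun z hz => ?_, ih hfits⟩
      have hza : z ∈ a := mem_of_mem_erase ((nonRecords_fillGreedy hfits).subset hz)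
      exact (le_or_gt z m).imp (le_greatestLE hza) id

theorem fillGreedy_skeleton_nonRecords (hw : IsGreedy m w) :
    fillGreedy m (skeleton m w) (nonRecords m w) = w := by
  induction w generalizing m with
  | nil => rfl
  | cons h t ih =>
    by_cases hm : m < h
    · simp only [IsGreedy, hm, ↓reduceIte] at hw
      simp only [skeleton, nonRecords, fillGreedy, hm, ↓reduceIte, ih hw]
    · simp only [IsGreedy, hm, ↓reduceIte] at hw
      obtain ⟨hgreedy, ht⟩ := hw
      have hpick : greatestLE m (h :: nonRecords m t) = h := by
        obtain ⟨hx, hxm⟩ := greatestLE_mem_and_le mem_cons_self (not_lt.mp hm)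
        refine le_antisymm ?_ (le_greatestLE mem_cons_self (not_lt.mp hm))
        rcases mem_cons.mp hx with hx | hx
        · exact hx.le
        · exact (hgreedy _ hx).resolve_right (not_lt.mpr hxm)
      simp only [skeleton, nonRecords, fillGreedy, hm, ↓reduceIte, hpick, erase_cons_head,
        ih ht]

theorem fillGreedy_perm {a' : List ℕ} (h : a ~ a') (s : List (Option ℕ)) :
    fillGreedy m s a = fillGreedy m s a' := by
  induction s generalizing m a a' with
  | nil => rfl
  | cons o s ih =>
    cases o with
    | some v => simp only [fillGreedy, ih h]
    | none => simp only [fillGreedy, greatestLE_perm h, ih (h.erase _)]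

theorem isGreedy_iff (hw : (m :: w).Nodup) :
    IsGreedy m w ↔ ¬ContainsTriple (fun x y z => y < z ∧ z < x) (m :: w) := by
  induction w generalizing m with
  | nil => simp [IsGreedy, ContainsTriple]
  | cons h t ih =>
    have hmono : ∀ {x x' y z : ℕ}, y < z ∧ z < x → x ≤ x' → y < z ∧ z < x' :=
      fun hP hx => ⟨hP.1, hP.2.trans_le hx⟩
    by_cases hm : m < h
    · rw [containsTriple_cons_cons_of_lt (P := fun x y z => y < z ∧ z < x) hmono
        (fun hP => hP.1.trans hP.2) hm, ← ih hw.of_cons]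
      simp only [IsGreedy, hm, ↓reduceIte]
    · have hmt : m ∉ t := fun hmt => (nodup_cons.mp hw).1 (mem_cons_of_mem h hmt)
      rw [containsTriple_cons_cons_of_le (P := fun x y z => y < z ∧ z < x) hmono (not_lt.mp hm),
        not_or, ← ih (hw.sublist ((sublist_cons_self h t).cons_cons m))]
      simp only [IsGreedy, hm, ↓reduceIte, not_exists, not_and]
      refine and_congr_left' ⟨fun hg z hz hhz hzm => ?_, fun hg y hy => ?_⟩
      · have := hg z (mem_nonRecords_of_le hz hzm.le)
        omega
      · have hyt := (nonRecords_sublist m t).subset hy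
        have := hg y hyt
        have : y ≠ m := fun hym => hmt (hym ▸ hyt)
        omega

theorem pairwise_nonRecords_iff (hw : (m :: w).Nodup) :
    (nonRecords m w).Pairwise (· ≤ ·) ↔
      ¬ContainsTriple (fun x y z => z < y ∧ y < x) (m :: w) := by
  induction w generalizing m with
  | nil => simp [nonRecords, ContainsTriple]
  | cons h t ih =>
    have hmono : ∀ {x x' y z : ℕ}, z < y ∧ y < x → x ≤ x' → z < y ∧ y < x' :=
      fun hP hx => ⟨hP.1, hP.2.trans_le hx⟩
    by_cases hm : m < h
    · rw [containsTriple_cons_cons_of_lt (P := fun x y z => z < y ∧ y < x) hmono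
        (fun hP => hP.2) hm, ← ih hw.of_cons]
      simp only [nonRecords, hm, ↓reduceIte]
    · have hhm : h ≠ m := fun hhm => (nodup_cons.mp hw).1 (hhm ▸ mem_cons_self)
      rw [containsTriple_cons_cons_of_le (P := fun x y z => z < y ∧ y < x) hmono (not_lt.mp hm),
        not_or, ← ih (hw.sublist ((sublist_cons_self h t).cons_cons m))]
      simp only [nonRecords, hm, ↓reduceIte, pairwise_cons, not_exists, not_and]
      refine and_congr_left' ⟨fun hs z hz hP => ?_, fun hs y hy => ?_⟩
      · have := hs z (mem_nonRecords_of_le hz (by omega))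
        omega
      · have := hs y ((nonRecords_sublist m t).subset hy)
        omega

def recordPeaks : List (Option ℕ) → ℕ
  | _ :: y :: z :: t => (if y.isSome ∧ z.isNone then 1 else 0) + recordPeaks (y :: z :: t)
  | _ => 0

theorem skeleton_cons (m a : ℕ) (t : List ℕ) :
    skeleton m (a :: t) = (if m < a then some a else none) :: skeleton (max m a) t := by
  by_cases hm : m < a
  · simp [skeleton, hm, max_eq_right hm.le]
  · simp [skeleton, hm, max_eq_left (not_lt.mp hm)]

theorem IsGreedy.tail {a : ℕ} {t : List ℕ} (h : IsGreedy m (a :: t)) : IsGreedy (max m a) t := by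
  by_cases hm : m < a
  · simpa [IsGreedy, hm, max_eq_right hm.le] using h
  · simp only [IsGreedy, hm, ↓reduceIte] at h
    simpa [max_eq_left (not_lt.mp hm)] using h.2

theorem pairwise_nonRecords_tail {a : ℕ} {t : List ℕ}
    (h : (nonRecords m (a :: t)).Pairwise (· ≤ ·)) : (nonRecords (max m a) t).Pairwise (· ≤ ·) := by
  by_cases hm : m < a
  · simpa [nonRecords, hm, max_eq_right hm.le] using h
  · simp only [nonRecords, hm, ↓reduceIte] at h
    simpa [max_eq_left (not_lt.mp hm)] using h.of_cons

/-- In a 312- or 321-avoiding word every peak is a record. -/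
theorem isPeak_iff {a b c : ℕ} {t : List ℕ} (hcb : c ≠ b)
    (hw : IsGreedy m (a :: b :: c :: t) ∨ (nonRecords m (a :: b :: c :: t)).Pairwise (· ≤ ·)) :
    a < b ∧ c < b ↔ max m a < b ∧ ¬max (max m a) b < c := by
  refine ⟨fun ⟨hab, hcb⟩ => ⟨max_lt ?_ hab, by omega⟩, fun ⟨hab, hc⟩ => by omega⟩
  by_contra hbm
  have ham : ¬m < a := by omega
  have hbm : ¬m < b := by omega
  have hcm : ¬m < c := by omega
  rcases hw with hw | hw
  · simp only [IsGreedy, ham, ↓reduceIte] at hw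
    have := hw.1 b (mem_nonRecords_of_le mem_cons_self (not_lt.mp hbm))
    omega
  · simp only [nonRecords, ham, hbm, hcm, ↓reduceIte, pairwise_cons] at hw
    have := hw.2.1 c mem_cons_self
    omega

theorem peaks_eq_recordPeaks (hw : w.Nodup)
    (hg : IsGreedy m w ∨ (nonRecords m w).Pairwise (· ≤ ·)) :
    peaks w = recordPeaks (skeleton m w) := by
  induction w generalizing m with
  | nil => simp [peaks, skeleton, recordPeaks]
  | cons a l ih =>
    rcases l with _ | ⟨b, _ | ⟨c, t⟩⟩
    · simp only [skeleton]
      split_ifs <;> rfl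
    · simp only [skeleton]
      split_ifs <;> rfl
    · have hcb : c ≠ b := fun h => (nodup_cons.mp hw.of_cons).1 (h ▸ mem_cons_self)
      rw [peaks_cons_cons_cons, ih hw.of_cons (hg.imp IsGreedy.tail pairwise_nonRecords_tail),
        skeleton_cons m a, skeleton_cons (max m a) b, skeleton_cons, recordPeaks,
        ← skeleton_cons]
      congr 1
      rw [if_congr (isPeak_iff hcb hg) rfl rfl]
      by_cases hb : max m a < b <;> simp [hb]

def sortNonRecords (w : List ℕ) : List ℕ :=
  fillHoles (skeleton 0 w) ((nonRecords 0 w).insertionSort (· ≤ ·))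

def refillGreedy (w : List ℕ) : List ℕ :=
  fillGreedy 0 (skeleton 0 w) (nonRecords 0 w)

theorem skeleton_sortNonRecords (w : List ℕ) : skeleton 0 (sortNonRecords w) = skeleton 0 w :=
  skeleton_fillHoles (forall₂_sort_nonRecords_bounds 0 w)

theorem nonRecords_sortNonRecords (w : List ℕ) :
    nonRecords 0 (sortNonRecords w) = (nonRecords 0 w).insertionSort (· ≤ ·) :=
  nonRecords_fillHoles (forall₂_sort_nonRecords_bounds 0 w)

theorem sortNonRecords_perm (w : List ℕ) : sortNonRecords w ~ w :=
  perm_of_skeleton_eq (skeleton_sortNonRecords w)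
    ((nonRecords_sortNonRecords w).symm ▸ perm_insertionSort _ _)

theorem refillGreedy_perm (w : List ℕ) : refillGreedy w ~ w :=
  perm_of_skeleton_eq (skeleton_fillGreedy (fitsHoles_nonRecords 0 w))
    (nonRecords_fillGreedy (fitsHoles_nonRecords 0 w))

theorem not_containsPat_312_iff (hw : w.Nodup) (h0 : 0 ∉ w) :
    ¬ContainsPat w [3, 1, 2] ↔ IsGreedy 0 w := by
  rw [isGreedy_iff (nodup_cons.mpr ⟨h0, hw⟩), containsTriple_cons_zero (fun hP => hP.1.trans hP.2),
    containsPat_312_iff]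

theorem not_containsPat_321_iff (hw : w.Nodup) (h0 : 0 ∉ w) :
    ¬ContainsPat w [3, 2, 1] ↔ (nonRecords 0 w).Pairwise (· ≤ ·) := by
  rw [pairwise_nonRecords_iff (nodup_cons.mpr ⟨h0, hw⟩), containsTriple_cons_zero (fun hP => hP.2),
    containsPat_321_iff]

theorem pairwise_nonRecords_sortNonRecords (w : List ℕ) :
    (nonRecords 0 (sortNonRecords w)).Pairwise (· ≤ ·) :=
  (nonRecords_sortNonRecords w).symm ▸ pairwise_insertionSort _ _

theorem isGreedy_refillGreedy (w : List ℕ) : IsGreedy 0 (refillGreedy w) :=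
  isGreedy_fillGreedy (fitsHoles_nonRecords 0 w)

theorem peaks_sortNonRecords (hw : w.Nodup) (h : IsGreedy 0 w) :
    peaks (sortNonRecords w) = peaks w := by
  rw [peaks_eq_recordPeaks ((sortNonRecords_perm w).nodup_iff.mpr hw)
      (.inr (pairwise_nonRecords_sortNonRecords w)),
    skeleton_sortNonRecords, ← peaks_eq_recordPeaks hw (.inl h)]

theorem peaks_refillGreedy (hw : w.Nodup) (h : (nonRecords 0 w).Pairwise (· ≤ ·)) :
    peaks (refillGreedy w) = peaks w := by
  rw [peaks_eq_recordPeaks ((refillGreedy_perm w).nodup_iff.mpr hw)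
      (.inl (isGreedy_refillGreedy w)),
    refillGreedy, skeleton_fillGreedy (fitsHoles_nonRecords 0 w),
    ← peaks_eq_recordPeaks hw (.inr h)]

theorem refillGreedy_sortNonRecords (h : IsGreedy 0 w) : refillGreedy (sortNonRecords w) = w := by
  rw [refillGreedy, skeleton_sortNonRecords, nonRecords_sortNonRecords,
    fillGreedy_perm (perm_insertionSort _ _), fillGreedy_skeleton_nonRecords h]

theorem sortNonRecords_refillGreedy (h : (nonRecords 0 w).Pairwise (· ≤ ·)) :
    sortNonRecords (refillGreedy w) = w := by
  have hperm := nonRecords_fillGreedy (fitsHoles_nonRecords 0 w)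
  have hsort : (nonRecords 0 (refillGreedy w)).insertionSort (· ≤ ·) = nonRecords 0 w :=
    ((perm_insertionSort _ _).trans hperm).eq_of_pairwise' (pairwise_insertionSort _ _) h
  rw [sortNonRecords, hsort, refillGreedy, skeleton_fillGreedy (fitsHoles_nonRecords 0 w),
    fillHoles_skeleton_nonRecords]

end LRMax

open LRMax

section PermWords

open List

variable {n : ℕ}

theorem permWord_injective : Function.Injective (permWord (n := n)) := fun σ τ h =>
  Equiv.ext fun i => Fin.ext (by simpa using congrFun (List.ofFn_inj.mp h) i)

theorem nodup_permWord (π : Equiv.Perm (Fin n)) : (permWord π).Nodup :=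
  List.nodup_ofFn.mpr fun i j h => π.injective (Fin.ext (by simpa using h))

theorem zero_notMem_permWord (π : Equiv.Perm (Fin n)) : 0 ∉ permWord π := by
  simp [permWord]

theorem exists_permWord_eq_of_perm {π : Equiv.Perm (Fin n)} {l : List ℕ} (h : l ~ permWord π) :
    ∃ σ : Equiv.Perm (Fin n), permWord σ = l := by
  have hlen : l.length = n := h.length_eq.trans (by simp [permWord])
  have hmem : ∀ x ∈ l, 1 ≤ x ∧ x ≤ n := fun x hx => by
    obtain ⟨i, rfl⟩ := List.mem_ofFn.mp (h.subset hx)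
    exact ⟨by omega, (π i).isLt⟩
  have hnodup : l.Nodup := h.nodup_iff.mpr (nodup_permWord π)
  have hbound (i : Fin n) : l[(i : ℕ)]'(by omega) - 1 < n := by
    have := hmem _ (List.getElem_mem (l := l) (by omega : (i : ℕ) < l.length))
    omega
  let f : Fin n → Fin n := fun i => ⟨l[(i : ℕ)]'(by omega) - 1, hbound i⟩
  have hf : f.Injective := fun i j hij => by
    have hi := hmem _ (List.getElem_mem (l := l) (by omega : (i : ℕ) < l.length))
    have hj := hmem _ (List.getElem_mem (l := l) (by omega : (j : ℕ) < l.length))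
    exact Fin.ext (hnodup.getElem_inj_iff.mp (by simp [f] at hij; omega))
  refine ⟨Equiv.ofBijective f hf.bijective_of_finite,
    List.ext_getElem (by simp [permWord, hlen]) fun i h₁ h₂ => ?_⟩
  have := hmem _ (List.getElem_mem h₂)
  simp [permWord, f]
  omega

noncomputable def liftWordMap (f : List ℕ → List ℕ) (hf : ∀ l, f l ~ l)
    (π : Equiv.Perm (Fin n)) : Equiv.Perm (Fin n) :=
  (exists_permWord_eq_of_perm (hf (permWord π))).choose

theorem permWord_liftWordMap (f : List ℕ → List ℕ) (hf : ∀ l, f l ~ l)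
    (π : Equiv.Perm (Fin n)) : permWord (liftWordMap f hf π) = f (permWord π) :=
  (exists_permWord_eq_of_perm (hf (permWord π))).choose_spec

end PermWords

theorem stmt1 (n k : ℕ) :
    acount n k peaks [[3,1,2]] = acount n k peaks [[3,2,1]] := by
  have avoid312 (π : Equiv.Perm (Fin n)) :=
    not_containsPat_312_iff (nodup_permWord π) (zero_notMem_permWord π)
  have avoid321 (π : Equiv.Perm (Fin n)) :=
    not_containsPat_321_iff (nodup_permWord π) (zero_notMem_permWord π)
  simp only [acount, AvoidsAll, List.forall_mem_singleton, avoid312, avoid321]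
  refine Finset.card_bij' (fun π _ => liftWordMap sortNonRecords sortNonRecords_perm π)
    (fun σ _ => liftWordMap refillGreedy refillGreedy_perm σ) ?_ ?_ ?_ ?_ <;>
    simp only [Finset.mem_filter, Finset.mem_univ, true_and]
  · rintro π ⟨h, rfl⟩
    rw [permWord_liftWordMap]
    exact ⟨pairwise_nonRecords_sortNonRecords _, peaks_sortNonRecords (nodup_permWord π) h⟩
  · rintro σ ⟨h, rfl⟩
    rw [permWord_liftWordMap]
    exact ⟨isGreedy_refillGreedy _, peaks_refillGreedy (nodup_permWord σ) h⟩
  · rintro π ⟨h, -⟩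
    apply permWord_injective
    rw [permWord_liftWordMap, permWord_liftWordMap, refillGreedy_sortNonRecords h]
  · rintro σ ⟨h, -⟩
    apply permWord_injective
    rw [permWord_liftWordMap, permWord_liftWordMap, sortNonRecords_refillGreedy h]
end

section
/- For all n ≥ 1 and k ≥ 0, the number of permutations of length n avoiding both 213 and 312 with exactly k ascents equals C(n−1, k), and the number of such permutations with exactly k descents also equals C(n−1, k). -/
/-!
Avoiding both 213 and 312 means having no valley `π j < π i, π k` with `i < j < k`, i.e. being
increasing up to the maximal value and decreasing after it. Such a permutation is determined by the
set `S ⊆ {1, …, n - 1}` of values standing left of the maximum: it lists `S` increasingly, then `n`,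
then the remaining values decreasingly, and every `S` arises. Its ascents are exactly the `#S`
positions before the maximum, so `C(n - 1, k)` permutations have `k` ascents; the other `n - 1 - k`
positions are descents, and `C(n - 1, n - 1 - k) = C(n - 1, k)`.
-/

open scoped Classical

open Finset Equiv

section Word

variable {n : ℕ} (π : Perm (Fin n))

lemma permWord_length : (permWord π).length = n := by
  simp [permWord]

lemma permWord_get (i : Fin (permWord π).length) :
    (permWord π).get i = (π (Fin.cast (permWord_length π) i) : ℕ) + 1 := by
  rw [List.get_eq_getElem]
  simp [permWord, Fin.cast]

lemma permWord_getD {i : ℕ} (hi : i < n) : (permWord π).getD i 0 = (π ⟨i, hi⟩ : ℕ) + 1 := by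
  simp [permWord, hi]

lemma permWord_getD_lt_permWord_getD_iff {i j : ℕ} (hi : i < n) (hj : j < n) :
    (permWord π).getD i 0 < (permWord π).getD j 0 ↔ π ⟨i, hi⟩ < π ⟨j, hj⟩ := by
  rw [permWord_getD π hi, permWord_getD π hj, Nat.add_lt_add_iff_right, Fin.val_fin_lt]

lemma containsPat_permWord_iff (ρ : List ℕ) :
    ContainsPat (permWord π) ρ ↔ ∃ f : Fin ρ.length → Fin n, StrictMono f ∧
      ∀ a b, ρ.get a < ρ.get b ↔ π (f a) < π (f b) := by
  let e := Fin.castOrderIso (permWord_length π)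
  constructor
  · rintro ⟨f, hf, h⟩
    refine ⟨e ∘ f, e.strictMono.comp hf, fun a b => ?_⟩
    simp only [h, permWord_get, Function.comp_apply, Nat.add_lt_add_iff_right, Fin.val_fin_lt]
    rfl
  · rintro ⟨f, hf, h⟩
    refine ⟨e.symm ∘ f, e.symm.strictMono.comp hf, fun a b => ?_⟩
    simp only [h, permWord_get, Function.comp_apply, Nat.add_lt_add_iff_right, Fin.val_fin_lt]
    rfl

lemma containsPat_permWord_three_iff (a b c : ℕ) :
    ContainsPat (permWord π) [a, b, c] ↔ ∃ i j k : Fin n, i < j ∧ j < k ∧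
      ∀ x y : Fin 3, ![a, b, c] x < ![a, b, c] y ↔ π (![i, j, k] x) < π (![i, j, k] y) := by
  rw [containsPat_permWord_iff]
  constructor
  · rintro ⟨f, hf, h⟩
    refine ⟨f 0, f 1, f 2, hf (by decide : (0 : Fin 3) < 1), hf (by decide : (1 : Fin 3) < 2),
      fun x y => ?_⟩
    convert h x y using 3 <;> fin_cases x <;> fin_cases y <;> rfl
  · rintro ⟨i, j, k, hij, hjk, h⟩
    refine ⟨![i, j, k], Fin.strictMono_iff_lt_succ.2 fun x => ?_, fun x y => ?_⟩
    · fin_cases x <;> assumption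
    · convert h x y using 2 <;> fin_cases x <;> fin_cases y <;> rfl

lemma containsPat_213_iff : ContainsPat (permWord π) [2, 1, 3] ↔
    ∃ i j k : Fin n, i < j ∧ j < k ∧ π j < π i ∧ π i < π k := by
  rw [containsPat_permWord_three_iff]
  refine exists₃_congr fun i j k => and_congr_right' <| and_congr_right' ?_
  simp [Fin.forall_fin_succ]
  simp only [Fin.le_def, Fin.lt_def]
  omega

lemma containsPat_312_iff_s6 : ContainsPat (permWord π) [3, 1, 2] ↔
    ∃ i j k : Fin n, i < j ∧ j < k ∧ π j < π k ∧ π k < π i := by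
  rw [containsPat_permWord_three_iff]
  refine exists₃_congr fun i j k => and_congr_right' <| and_congr_right' ?_
  simp [Fin.forall_fin_succ]
  simp only [Fin.le_def, Fin.lt_def]
  omega

end Word

def NoValley {n : ℕ} (π : Perm (Fin n)) : Prop :=
  ∀ i j k : Fin n, i < j → j < k → ¬ (π j < π i ∧ π j < π k)

lemma avoidsAll_213_312_iff_noValley {n : ℕ} (π : Perm (Fin n)) :
    AvoidsAll (permWord π) [[2, 1, 3], [3, 1, 2]] ↔ NoValley π := by
  simp only [AvoidsAll, List.mem_cons, List.not_mem_nil, or_false, forall_eq_or_imp, forall_eq,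
    containsPat_213_iff, containsPat_312_iff_s6, NoValley]
  constructor
  · rintro ⟨h213, h312⟩ i j k hij hjk ⟨hji, hjk'⟩
    rcases lt_trichotomy (π i) (π k) with hik | hik | hik
    · exact h213 ⟨i, j, k, hij, hjk, hji, hik⟩
    · exact (hij.trans hjk).ne (π.injective hik)
    · exact h312 ⟨i, j, k, hij, hjk, hjk', hik⟩
  · intro h
    exact ⟨fun ⟨i, j, k, hij, hjk, hji, hik⟩ => h i j k hij hjk ⟨hji, hji.trans hik⟩,
      fun ⟨i, j, k, hij, hjk, hjk', hki⟩ => h i j k hij hjk ⟨hjk'.trans hki, hjk'⟩⟩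

section CardFilterLt

variable {α : Type*} [LinearOrder α] {T : Finset α} {u v : α}

lemma card_filter_lt_lt_card (hv : v ∈ T) : #{x ∈ T | x < v} < #T :=
  card_lt_card <| filter_ssubset.2 ⟨v, hv, lt_irrefl v⟩

lemma card_filter_lt_lt_card_filter_lt (hv : v ∈ T) (hvu : v < u) :
    #{x ∈ T | x < v} < #{x ∈ T | x < u} :=
  card_lt_card <| (ssubset_iff_of_subset (monotone_filter_right T fun _ _ h => h.trans hvu)).2
    ⟨v, mem_filter.2 ⟨hv, hvu⟩, fun h => lt_irrefl v (mem_filter.1 h).2⟩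

end CardFilterLt

section UnimodalPerm

variable {m : ℕ} (S : Finset (Fin (m + 1)))

/-- The position of `v` in the word listing `S` increasingly and then `Sᶜ` decreasingly. -/
def unimodalPos (v : Fin (m + 1)) : ℕ :=
  if v ∈ S then #{u ∈ S | u < v} else m - #{u ∈ Sᶜ | u < v}

variable {S}

lemma card_filter_compl_lt_add_card_le {v : Fin (m + 1)} (hv : v ∉ S) :
    #{u ∈ Sᶜ | u < v} + #S ≤ m := by
  have := card_filter_lt_lt_card (mem_compl.2 hv)
  rw [card_compl, Fintype.card_fin] at this
  have := S.card_le_univ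
  simp only [Fintype.card_fin] at this
  omega

lemma unimodalPos_lt_card_iff {v : Fin (m + 1)} : unimodalPos S v < #S ↔ v ∈ S := by
  unfold unimodalPos
  split_ifs with hv
  · exact iff_of_true (card_filter_lt_lt_card hv) hv
  · have := card_filter_compl_lt_add_card_le hv
    exact iff_of_false (by omega) hv

lemma unimodalPos_le (v : Fin (m + 1)) : unimodalPos S v ≤ m := by
  unfold unimodalPos
  split_ifs with hv
  · have := card_filter_lt_lt_card hv
    have := S.card_le_univ
    simp only [Fintype.card_fin] at this
    omega
  · omega

lemma unimodalPos_lt_of_mem {u v : Fin (m + 1)} (hv : v ∈ S) (hvu : v < u) :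
    unimodalPos S v < unimodalPos S u := by
  by_cases hu : u ∈ S
  · simpa [unimodalPos, hu, hv] using card_filter_lt_lt_card_filter_lt hv hvu
  · exact (unimodalPos_lt_card_iff.2 hv).trans_le (not_lt.1 (mt unimodalPos_lt_card_iff.1 hu))

lemma unimodalPos_lt_of_notMem {u v : Fin (m + 1)} (hv : v ∉ S) (hvu : v < u) :
    unimodalPos S u < unimodalPos S v := by
  by_cases hu : u ∈ S
  · exact (unimodalPos_lt_card_iff.2 hu).trans_le (not_lt.1 (mt unimodalPos_lt_card_iff.1 hv))
  · have := card_filter_lt_lt_card_filter_lt (mem_compl.2 hv) hvu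
    have := card_filter_compl_lt_add_card_le hu
    simp only [unimodalPos, hu, hv, if_false]
    omega

lemma unimodalPos_injective : Function.Injective (unimodalPos S) := by
  intro v u h
  by_contra hne
  wlog hvu : v < u generalizing v u
  · exact this h.symm (Ne.symm hne) (lt_of_le_of_ne (not_lt.1 hvu) (Ne.symm hne))
  by_cases hv : v ∈ S
  · exact (unimodalPos_lt_of_mem hv hvu).ne h
  · exact (unimodalPos_lt_of_notMem hv hvu).ne h.symm

lemma unimodalPos_last (h : Fin.last m ∉ S) : unimodalPos S (Fin.last m) = #S := by
  have hfilter : ({u ∈ Sᶜ | u < Fin.last m} : Finset _) = Sᶜ.erase (Fin.last m) := by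
    ext u
    simp [Fin.lt_last_iff_ne_last, and_comm]
  have := card_lt_univ_of_notMem h
  simp only [Fintype.card_fin] at this
  simp only [unimodalPos, h, if_false, hfilter, card_erase_of_mem (mem_compl.2 h), card_compl,
    Fintype.card_fin]
  omega

variable (S) in
noncomputable def unimodalPerm : Perm (Fin (m + 1)) :=
  (Equiv.ofBijective
    (fun v => (⟨unimodalPos S v, Nat.lt_succ_of_le (unimodalPos_le v)⟩ : Fin (m + 1)))
    (Finite.injective_iff_bijective.1 fun _ _ h => unimodalPos_injective (Fin.val_eq_of_eq h))).symm

lemma val_unimodalPerm_symm_apply (v : Fin (m + 1)) :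
    ((unimodalPerm S).symm v : ℕ) = unimodalPos S v := rfl

lemma noValley_unimodalPerm : NoValley (unimodalPerm S) := by
  intro i j k hij hjk ⟨hji, hjk'⟩
  by_cases hv : unimodalPerm S j ∈ S
  · have := unimodalPos_lt_of_mem hv hji
    simp only [← val_unimodalPerm_symm_apply, symm_apply_apply, Fin.val_fin_lt] at this
    exact lt_asymm hij this
  · have := unimodalPos_lt_of_notMem hv hjk'
    simp only [← val_unimodalPerm_symm_apply, symm_apply_apply, Fin.val_fin_lt] at this
    exact lt_asymm hjk this

end UnimodalPerm

section LeftOfMax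

variable {m : ℕ} (π : Perm (Fin (m + 1)))

lemma perm_apply_lt_last_iff (x : Fin (m + 1)) :
    π x < Fin.last m ↔ x ≠ π.symm (Fin.last m) := by
  rw [Fin.lt_last_iff_ne_last, Ne, Ne, Equiv.eq_symm_apply]

lemma ascents_add_descents : ascents (permWord π) + descents (permWord π) = m := by
  have hsplit := card_filter_add_card_filter_not (s := range m) fun i =>
    (permWord π).getD i 0 < (permWord π).getD (i + 1) 0
  rw [card_range] at hsplit
  rw [ascents, descents, permWord_length, Nat.add_sub_cancel]
  refine Eq.trans ?_ hsplit
  congr 2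
  refine filter_congr fun i hi => ?_
  have hi : i < m := mem_range.1 hi
  rw [permWord_getD_lt_permWord_getD_iff π (by omega) (by omega),
    permWord_getD_lt_permWord_getD_iff π (by omega) (by omega)]
  simp only [not_lt]
  exact (π.injective.ne (by simp [Fin.ext_iff])).le_iff_lt.symm

def leftOfMax : Finset (Fin (m + 1)) :=
  {v | π.symm v < π.symm (Fin.last m)}

lemma last_notMem_leftOfMax : Fin.last m ∉ leftOfMax π := by
  simp [leftOfMax]

lemma card_leftOfMax : #(leftOfMax π) = π.symm (Fin.last m) := by
  rw [← Fin.card_Iio]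
  exact card_equiv π.symm fun v => by simp [leftOfMax]

lemma leftOfMax_unimodalPerm {S : Finset (Fin (m + 1))} (hS : Fin.last m ∉ S) :
    leftOfMax (unimodalPerm S) = S := by
  ext v
  simp only [leftOfMax, mem_filter, mem_univ, true_and, Fin.lt_def, val_unimodalPerm_symm_apply,
    unimodalPos_last hS, unimodalPos_lt_card_iff]

end LeftOfMax

namespace NoValley

variable {m : ℕ} {π : Perm (Fin (m + 1))}

lemma strictMonoOn (hπ : NoValley π) : StrictMonoOn π (Set.Iic (π.symm (Fin.last m))) := by
  intro i _ j hj hij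
  rcases (Set.mem_Iic.1 hj).eq_or_lt with rfl | hjM
  · rw [π.apply_symm_apply]
    exact (perm_apply_lt_last_iff π i).2 hij.ne
  · by_contra hji
    refine hπ i j _ hij hjM ⟨lt_of_le_of_ne (not_lt.1 hji) (π.injective.ne hij.ne'), ?_⟩
    rw [π.apply_symm_apply]
    exact (perm_apply_lt_last_iff π j).2 hjM.ne

lemma strictAntiOn (hπ : NoValley π) : StrictAntiOn π (Set.Ici (π.symm (Fin.last m))) := by
  intro i hi j _ hij
  rcases (Set.mem_Ici.1 hi).eq_or_lt with rfl | hMi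
  · rw [π.apply_symm_apply]
    exact (perm_apply_lt_last_iff π j).2 hij.ne'
  · by_contra hij'
    refine hπ _ i j hMi hij ⟨?_, lt_of_le_of_ne (not_lt.1 hij') (π.injective.ne hij.ne)⟩
    rw [π.apply_symm_apply]
    exact (perm_apply_lt_last_iff π i).2 hMi.ne'

lemma val_symm_apply_eq_unimodalPos (hπ : NoValley π) (v : Fin (m + 1)) :
    (π.symm v : ℕ) = unimodalPos (leftOfMax π) v := by
  unfold unimodalPos
  split_ifs with hv <;> simp only [leftOfMax, mem_filter, mem_univ, true_and, not_lt] at hv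
  · rw [← Fin.card_Iio]
    refine (card_equiv π.symm fun u => ?_).symm
    simp only [leftOfMax, mem_filter, mem_univ, true_and, mem_Iio]
    constructor
    · rintro ⟨hu, huv⟩
      exact (hπ.strictMonoOn.lt_iff_lt hu.le hv.le).1 (by simpa using huv)
    · intro huv
      refine ⟨huv.trans hv, ?_⟩
      simpa using (hπ.strictMonoOn.lt_iff_lt (huv.trans hv).le hv.le).2 huv
  · have hcard : #{u ∈ (leftOfMax π)ᶜ | u < v} = #(Ioi (π.symm v)) := by
      refine card_equiv π.symm fun u => ?_
      simp only [leftOfMax, mem_filter, mem_compl, mem_univ, true_and, not_lt, mem_Ioi]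
      constructor
      · rintro ⟨hu, huv⟩
        exact (hπ.strictAntiOn.lt_iff_gt hu hv).1 (by simpa using huv)
      · intro hvu
        refine ⟨hv.trans hvu.le, ?_⟩
        simpa using (hπ.strictAntiOn.lt_iff_gt (hv.trans hvu.le) hv).2 hvu
    rw [hcard, Fin.card_Ioi]
    have := (π.symm v).is_le
    omega

lemma unimodalPerm_leftOfMax (hπ : NoValley π) : unimodalPerm (leftOfMax π) = π := by
  have : (unimodalPerm (leftOfMax π)).symm = π.symm :=
    Equiv.ext fun v => Fin.ext (hπ.val_symm_apply_eq_unimodalPos v).symm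
  simpa using congrArg Equiv.symm this

lemma ascents_permWord (hπ : NoValley π) : ascents (permWord π) = π.symm (Fin.last m) := by
  have hM := (π.symm (Fin.last m)).is_le
  rw [ascents, permWord_length, Nat.add_sub_cancel, ← card_range (π.symm (Fin.last m) : ℕ)]
  congr 1
  ext i
  simp only [mem_filter, mem_range]
  constructor
  · rintro ⟨hi, hasc⟩
    rw [permWord_getD_lt_permWord_getD_iff π (by omega) (by omega)] at hasc
    by_contra hMi
    exact lt_asymm hasc (hπ.strictAntiOn (Fin.le_def.2 (not_lt.1 hMi))
      (Fin.le_def.2 (by simp only; omega)) (Fin.lt_def.2 (by simp)))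
  · intro hiM
    refine ⟨by omega, ?_⟩
    rw [permWord_getD_lt_permWord_getD_iff π (by omega) (by omega)]
    exact hπ.strictMonoOn (Fin.le_def.2 (by simp only; omega))
      (Fin.le_def.2 (by simp only; omega)) (Fin.lt_def.2 (by simp))

end NoValley

lemma card_noValley_ascents_eq_choose (m k : ℕ) :
    #{π : Perm (Fin (m + 1)) | NoValley π ∧ ascents (permWord π) = k} = m.choose k := by
  have hchoose : #(powersetCard k (univ.erase (Fin.last m))) = m.choose k := by
    simp [card_erase_of_mem]
  rw [← hchoose]
  refine card_nbij' leftOfMax unimodalPerm ?_ ?_ ?_ ?_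
  · intro π hπ
    simp only [mem_coe, mem_filter, mem_univ, true_and] at hπ
    simp only [mem_coe, mem_powersetCard, subset_erase, subset_univ, true_and,
      last_notMem_leftOfMax, not_false_eq_true, card_leftOfMax, ← hπ.1.ascents_permWord, hπ.2]
  · intro S hS
    simp only [mem_coe, mem_powersetCard, subset_erase] at hS
    simp only [mem_coe, mem_filter, mem_univ, true_and]
    refine ⟨noValley_unimodalPerm, ?_⟩
    rw [noValley_unimodalPerm.ascents_permWord, val_unimodalPerm_symm_apply,
      unimodalPos_last hS.1.2, hS.2]
  · intro π hπ
    exact (mem_filter.1 hπ).2.1.unimodalPerm_leftOfMax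
  · intro S hS
    exact leftOfMax_unimodalPerm (subset_erase.1 (mem_powersetCard.1 hS).1).2

lemma card_noValley_descents_eq_choose (m k : ℕ) :
    #{π : Perm (Fin (m + 1)) | NoValley π ∧ descents (permWord π) = k} = m.choose k := by
  by_cases hk : k ≤ m
  · rw [← Nat.choose_symm hk, ← card_noValley_ascents_eq_choose]
    congr 1
    refine filter_congr fun π _ => and_congr_right fun _ => ?_
    have := ascents_add_descents π
    omega
  · rw [Nat.choose_eq_zero_of_lt (not_le.1 hk), card_eq_zero, filter_eq_empty_iff]
    rintro π - ⟨-, hπ⟩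
    have := ascents_add_descents π
    omega

theorem stmt6 (n k : ℕ) (hn : 1 ≤ n) :
    acount n k ascents [[2,1,3],[3,1,2]] = Nat.choose (n - 1) k ∧
    acount n k descents [[2,1,3],[3,1,2]] = Nat.choose (n - 1) k := by
  obtain ⟨m, rfl⟩ := Nat.exists_eq_add_of_le' hn
  simp only [acount, avoidsAll_213_312_iff_noValley, Nat.add_sub_cancel]
  exact ⟨card_noValley_ascents_eq_choose m k, card_noValley_descents_eq_choose m k⟩
end

section
/- For all n ≥ 1, the number of permutations of length n avoiding both 213 and 312 with exactly k double ascents equals n if k = 0 and equals C(n−1, k+1) if k ≥ 1; the same formula holds for the number of such permutations with exactly k double descents. -/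
open scoped Classical

namespace Stmt7aux
open Finset
variable {n : ℕ}
def NoPat (π : Equiv.Perm (Fin n)) : Prop :=
  ∀ i j k : Fin n, i < j → j < k → π j < π i → π j < π k → False
lemma permWord_length (π : Equiv.Perm (Fin n)) : (permWord π).length = n := by
  simp [permWord]
lemma permWord_get (π : Equiv.Perm (Fin n)) (i : Fin (permWord π).length) :
    (permWord π).get i = (π (Fin.cast (permWord_length π) i) : ℕ) + 1 := by
  rw [List.get_eq_getElem]; simp only [permWord, List.getElem_ofFn]; rfl

lemma triple_of_contains (π : Equiv.Perm (Fin n)) (ρ : List ℕ) (hρ : ρ = [2,1,3] ∨ ρ = [3,1,2])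
    (h : ContainsPat (permWord π) ρ) :
    ∃ i j k : Fin n, i < j ∧ j < k ∧ π j < π i ∧ π j < π k := by
  obtain ⟨f, hf, hval⟩ := h
  have key : ∀ a b : Fin ρ.length, ρ.get a < ρ.get b →
      π (Fin.cast (permWord_length π) (f a)) < π (Fin.cast (permWord_length π) (f b)) := by
    intro a b hab
    have h2 := (hval a b).mp hab
    rw [permWord_get, permWord_get] at h2
    exact show (π _ : ℕ) < (π _ : ℕ) by omega
  have hc : ∀ a b : Fin (permWord π).length, a < b →
      Fin.cast (permWord_length π) a < Fin.cast (permWord_length π) b := by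
    intro a b hab; exact hab
  rcases hρ with hρ | hρ <;> subst hρ
  · refine ⟨_, _, _, hc _ _ (hf (show (⟨0, by norm_num⟩ : Fin 3) < ⟨1, by norm_num⟩ by norm_num [Fin.lt_def])),
      hc _ _ (hf (show (⟨1, by norm_num⟩ : Fin 3) < ⟨2, by norm_num⟩ by norm_num [Fin.lt_def])),
      key ⟨1, by norm_num⟩ ⟨0, by norm_num⟩ (by decide),
      key ⟨1, by norm_num⟩ ⟨2, by norm_num⟩ (by decide)⟩
  · refine ⟨_, _, _, hc _ _ (hf (show (⟨0, by norm_num⟩ : Fin 3) < ⟨1, by norm_num⟩ by norm_num [Fin.lt_def])),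
      hc _ _ (hf (show (⟨1, by norm_num⟩ : Fin 3) < ⟨2, by norm_num⟩ by norm_num [Fin.lt_def])),
      key ⟨1, by norm_num⟩ ⟨0, by norm_num⟩ (by decide),
      key ⟨1, by norm_num⟩ ⟨2, by norm_num⟩ (by decide)⟩

lemma contains_of_triple (π : Equiv.Perm (Fin n)) {i j k : Fin n}
    (hij : i < j) (hjk : j < k) (h1 : π j < π i) (h2 : π j < π k) :
    ContainsPat (permWord π) [2,1,3] ∨ ContainsPat (permWord π) [3,1,2] := by
  have hik : i ≠ k := by intro h; subst h; exact absurd hjk (not_lt_of_gt hij)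
  have hπik : π i ≠ π k := fun h => hik (π.injective h)
  have e1 : (π j : ℕ) < π i := h1
  have e3 : (π j : ℕ) < π k := h2
  have eij : (i : ℕ) < j := hij
  have ejk : (j : ℕ) < k := hjk
  have hkn : (k : ℕ) < n := k.isLt
  have mem : ∀ m : ℕ, m < 3 → (if m = 0 then (i:ℕ) else if m = 1 then (j:ℕ) else (k:ℕ)) < (permWord π).length := by
    intro m _; rw [permWord_length]; split_ifs <;> omega
  set f : Fin 3 → Fin (permWord π).length := fun a =>
    ⟨if (a:ℕ) = 0 then (i:ℕ) else if (a:ℕ) = 1 then (j:ℕ) else (k:ℕ), mem a a.isLt⟩ with hfdef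
  have hmono : StrictMono f := by
    intro a b hab
    have ha := a.isLt; have hb := b.isLt
    have hab' : (a : ℕ) < b := hab
    simp only [hfdef, Fin.mk_lt_mk]
    split_ifs <;> omega
  have hget : ∀ a : Fin 3, ((permWord π).get (f a) : ℕ) =
      (π (if (a:ℕ) = 0 then i else if (a:ℕ) = 1 then j else k) : ℕ) + 1 := by
    intro a
    rw [permWord_get]
    congr 2
    apply Fin.ext
    simp [hfdef]
    split_ifs <;> rfl
  rcases lt_or_gt_of_ne hπik with hik' | hik'
  · left
    have e2 : (π i : ℕ) < π k := hik'
    refine ⟨f, hmono, ?_⟩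
    intro a b
    rw [hget, hget]
    have ha : (a:ℕ) < 3 := a.isLt
    have hb : (b:ℕ) < 3 := b.isLt
    rcases (show (a:ℕ) = 0 ∨ (a:ℕ) = 1 ∨ (a:ℕ) = 2 by omega) with h | h | h <;>
      rcases (show (b:ℕ) = 0 ∨ (b:ℕ) = 1 ∨ (b:ℕ) = 2 by omega) with h' | h' | h' <;>
      simp only [List.get_eq_getElem, h, h'] <;>
      first
        | (norm_num; omega)
        | norm_num
        | omega
  · right
    have e2 : (π k : ℕ) < π i := hik'
    refine ⟨f, hmono, ?_⟩
    intro a b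
    rw [hget, hget]
    have ha : (a:ℕ) < 3 := a.isLt
    have hb : (b:ℕ) < 3 := b.isLt
    rcases (show (a:ℕ) = 0 ∨ (a:ℕ) = 1 ∨ (a:ℕ) = 2 by omega) with h | h | h <;>
      rcases (show (b:ℕ) = 0 ∨ (b:ℕ) = 1 ∨ (b:ℕ) = 2 by omega) with h' | h' | h' <;>
      simp only [List.get_eq_getElem, h, h'] <;>
      first
        | (norm_num; omega)
        | norm_num
        | omega

lemma avoids_iff (π : Equiv.Perm (Fin n)) :
    AvoidsAll (permWord π) [[2,1,3],[3,1,2]] ↔ NoPat π := by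
  constructor
  · intro hA i j k hij hjk h1 h2
    rcases contains_of_triple π hij hjk h1 h2 with h | h
    · exact hA [2,1,3] (by simp) h
    · exact hA [3,1,2] (by simp) h
  · intro hN ρ hρ hC
    simp only [List.mem_cons, List.mem_singleton, List.not_mem_nil, or_false] at hρ
    obtain ⟨i, j, k, hij, hjk, h1, h2⟩ := triple_of_contains π ρ hρ hC
    exact hN i j k hij hjk h1 h2


lemma card_compl' (S : Finset (Fin n)) : Sᶜ.card = n - S.card := by
  rw [Finset.card_compl, Fintype.card_fin]

noncomputable def phiFun (S : Finset (Fin n)) : Fin n → Fin n := fun i =>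
  if h : (i : ℕ) < n - S.card then Sᶜ.orderEmbOfFin (card_compl' S) ⟨i, h⟩
  else S.orderEmbOfFin rfl ⟨n - 1 - i, by have := i.isLt; omega⟩

lemma phiFun_pos (S : Finset (Fin n)) (i : Fin n) (h : (i : ℕ) < n - S.card) :
    phiFun S i = Sᶜ.orderEmbOfFin (card_compl' S) ⟨i, h⟩ := dif_pos h

lemma phiFun_neg (S : Finset (Fin n)) (i : Fin n) (h : ¬ ((i : ℕ) < n - S.card)) :
    phiFun S i = S.orderEmbOfFin rfl ⟨n - 1 - i, by have := i.isLt; omega⟩ := dif_neg h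

lemma phiFun_mem_pos (S : Finset (Fin n)) (i : Fin n) (h : (i : ℕ) < n - S.card) :
    phiFun S i ∈ Sᶜ := by rw [phiFun_pos S i h]; exact Finset.orderEmbOfFin_mem _ _ _

lemma phiFun_mem_neg (S : Finset (Fin n)) (i : Fin n) (h : ¬ ((i : ℕ) < n - S.card)) :
    phiFun S i ∈ S := by rw [phiFun_neg S i h]; exact Finset.orderEmbOfFin_mem _ _ _

lemma phiFun_lt_pos (S : Finset (Fin n)) {i j : Fin n} (hij : i < j) (hj : (j : ℕ) < n - S.card) :
    phiFun S i < phiFun S j := by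
  have hi : (i : ℕ) < n - S.card := lt_trans hij hj
  rw [phiFun_pos S i hi, phiFun_pos S j hj]
  exact (Sᶜ.orderEmbOfFin (card_compl' S)).strictMono (by exact hij)

lemma phiFun_lt_neg (S : Finset (Fin n)) {i j : Fin n} (hi : ¬ ((i : ℕ) < n - S.card))
    (hij : i < j) : phiFun S j < phiFun S i := by
  have hj : ¬ ((j : ℕ) < n - S.card) := by
    have : (i:ℕ) < j := hij; omega
  rw [phiFun_neg S i hi, phiFun_neg S j hj]
  apply (S.orderEmbOfFin rfl).strictMono
  have h1 : (i:ℕ) < j := hij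
  have h2 := j.isLt
  exact show n - 1 - (j:ℕ) < n - 1 - (i:ℕ) by omega

lemma phiFun_injective (S : Finset (Fin n)) : Function.Injective (phiFun S) := by
  intro i j hij
  rcases lt_trichotomy i j with h | h | h
  · by_cases hj : (j : ℕ) < n - S.card
    · exact absurd hij (ne_of_lt (phiFun_lt_pos S h hj))
    · by_cases hi : (i : ℕ) < n - S.card
      · have := phiFun_mem_pos S i hi
        rw [hij] at this
        exact absurd (phiFun_mem_neg S j hj) (Finset.mem_compl.mp this)
      · exact absurd hij.symm (ne_of_lt (phiFun_lt_neg S hi h))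
  · exact h
  · by_cases hi : (i : ℕ) < n - S.card
    · exact absurd hij.symm (ne_of_lt (phiFun_lt_pos S h hi))
    · by_cases hj : (j : ℕ) < n - S.card
      · have := phiFun_mem_pos S j hj
        rw [← hij] at this
        exact absurd (phiFun_mem_neg S i hi) (Finset.mem_compl.mp this)
      · exact absurd hij (ne_of_lt (phiFun_lt_neg S hj h))

noncomputable def Phi (S : Finset (Fin n)) : Equiv.Perm (Fin n) :=
  Equiv.ofBijective _ (Finite.injective_iff_bijective.mp (phiFun_injective S))

lemma Phi_apply (S : Finset (Fin n)) (i : Fin n) : Phi S i = phiFun S i := rfl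

lemma noPat_Phi (S : Finset (Fin n)) : NoPat (Phi S) := by
  intro i j k hij hjk h1 h2
  by_cases hj : (j : ℕ) < n - S.card
  · exact absurd h1 (not_lt_of_gt (phiFun_lt_pos S hij hj))
  · exact absurd h2 (not_lt_of_gt (phiFun_lt_neg S hj hjk))

/-- the `top` element hypothesis -/
def HTop (S : Finset (Fin n)) : Prop := ∀ x ∈ S, (x : ℕ) < n - 1

lemma htop_card_le {S : Finset (Fin n)} (hn : 1 ≤ n) (hS : HTop S) : S.card ≤ n - 1 := by
  classical
  have hsub : S ⊆ Finset.univ.erase ⟨n - 1, by omega⟩ := by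
    intro x hx
    refine Finset.mem_erase.mpr ⟨?_, Finset.mem_univ x⟩
    intro h
    have := hS x hx
    rw [h] at this
    simp at this
  have := Finset.card_le_card hsub
  rwa [Finset.card_erase_of_mem (Finset.mem_univ _), Finset.card_univ, Fintype.card_fin] at this

lemma val_le_sub_one (a : Fin n) : (a : ℕ) ≤ n - 1 := by have := a.isLt; omega

lemma phiFun_last (hn : 1 ≤ n) (S : Finset (Fin n)) (hS : HTop S) :
    phiFun S ⟨n - S.card - 1, by have := htop_card_le hn hS; omega⟩ = ⟨n - 1, by omega⟩ := by
  have hd := htop_card_le hn hS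
  have hlt : n - S.card - 1 < n - S.card := by omega
  rw [phiFun_pos S _ hlt]
  have hmem : (⟨n - 1, by omega⟩ : Fin n) ∈ Sᶜ := by
    rw [Finset.mem_compl]
    intro h
    have := hS _ h
    simp at this
  have hpos : 0 < n - S.card := by omega
  have := Finset.orderEmbOfFin_last (card_compl' S) hpos
  have heq : (⟨n - S.card - 1, hlt⟩ : Fin (n - S.card)) = ⟨n - S.card - 1, Nat.sub_lt hpos (Nat.succ_pos 0)⟩ := rfl
  rw [heq, this]
  refine le_antisymm (Fin.le_def.mpr ?_) (Finset.le_max' _ _ hmem)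
  exact val_le_sub_one _


lemma phiFun_succ_iff (hn : 1 ≤ n) (S : Finset (Fin n)) (hS : HTop S) {i : ℕ} (h : i + 1 < n) :
    (phiFun S ⟨i, by omega⟩ < phiFun S ⟨i + 1, h⟩ ↔ i + 1 < n - S.card) := by
  have hd := htop_card_le hn hS
  constructor
  · intro hlt
    by_contra hge
    rcases Nat.lt_or_ge i (n - S.card) with hi | hi
    · -- i = n - S.card - 1, boundary
      have hieq : i = n - S.card - 1 := by omega
      have : phiFun S ⟨i, by omega⟩ = ⟨n - 1, by omega⟩ := by
        have := phiFun_last hn S hS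
        convert this using 2
        exact Fin.ext hieq
      rw [this] at hlt
      have hmem : phiFun S ⟨i + 1, h⟩ ∈ S := phiFun_mem_neg S _ (by simp; omega)
      have := hS _ hmem
      have hlt' : (n - 1 : ℕ) < (phiFun S ⟨i + 1, h⟩ : ℕ) := hlt
      omega
    · exact absurd hlt (not_lt_of_gt (phiFun_lt_neg S (by simp; omega) (by exact Fin.mk_lt_mk.mpr (by omega))))
  · intro hlt
    exact phiFun_lt_pos S (Fin.mk_lt_mk.mpr (by omega)) hlt

lemma Phi_succ_iff (hn : 1 ≤ n) (S : Finset (Fin n)) (hS : HTop S) {i : ℕ} (h : i + 1 < n) :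
    (Phi S ⟨i, by omega⟩ < Phi S ⟨i + 1, h⟩ ↔ i + 1 < n - S.card) :=
  phiFun_succ_iff hn S hS h

lemma permWord_getD (π : Equiv.Perm (Fin n)) (i : ℕ) (h : i < n) :
    (permWord π).getD i 0 = (π ⟨i, h⟩ : ℕ) + 1 := by
  have hl : i < (permWord π).length := by rw [permWord_length]; exact h
  rw [List.getD_eq_getElem _ _ hl]
  simp [permWord]

lemma dasc_Phi (hn : 1 ≤ n) (S : Finset (Fin n)) (hS : HTop S) :
    dascents (permWord (Phi S)) = n - S.card - 2 := by
  unfold dascents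
  rw [permWord_length]
  have key : ∀ i ∈ Finset.range (n - 2),
      (((permWord (Phi S)).getD i 0 < (permWord (Phi S)).getD (i + 1) 0 ∧
        (permWord (Phi S)).getD (i + 1) 0 < (permWord (Phi S)).getD (i + 2) 0) ↔
       i < n - S.card - 2) := by
    intro i hi
    rw [Finset.mem_range] at hi
    have h2 : i + 2 < n := by omega
    have h1 : i + 1 < n := by omega
    have h0 : i < n := by omega
    rw [permWord_getD _ i h0, permWord_getD _ (i+1) h1, permWord_getD _ (i+2) h2]
    have c1 : (Phi S ⟨i, h0⟩ < Phi S ⟨i+1, h1⟩) ↔ i + 1 < n - S.card := Phi_succ_iff hn S hS h1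
    have c2 : (Phi S ⟨i+1, h1⟩ < Phi S ⟨i+2, h2⟩) ↔ i + 2 < n - S.card := Phi_succ_iff hn S hS h2
    have l1 : (Phi S ⟨i, h0⟩ : ℕ) + 1 < (Phi S ⟨i+1, h1⟩ : ℕ) + 1 ↔ i + 1 < n - S.card := by
      rw [← c1]; exact ⟨fun h => by exact show (Phi S ⟨i,h0⟩ :ℕ) < _ by omega, fun h => by
        have : (Phi S ⟨i,h0⟩ : ℕ) < Phi S ⟨i+1,h1⟩ := h; omega⟩
    have l2 : (Phi S ⟨i+1, h1⟩ : ℕ) + 1 < (Phi S ⟨i+2, h2⟩ : ℕ) + 1 ↔ i + 2 < n - S.card := by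
      rw [← c2]; exact ⟨fun h => by exact show (Phi S ⟨i+1,h1⟩ :ℕ) < _ by omega, fun h => by
        have : (Phi S ⟨i+1,h1⟩ : ℕ) < Phi S ⟨i+2,h2⟩ := h; omega⟩
    rw [l1, l2]
    omega
  rw [Finset.filter_congr key]
  have : Finset.filter (fun i => i < n - S.card - 2) (Finset.range (n - 2)) =
      Finset.range (n - S.card - 2) := by
    ext x
    simp only [Finset.mem_filter, Finset.mem_range]
    omega
  rw [this, Finset.card_range]

lemma ddes_Phi (hn : 1 ≤ n) (S : Finset (Fin n)) (hS : HTop S) :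
    ddescents (permWord (Phi S)) = (n - 2) - (n - S.card - 1) := by
  unfold ddescents
  rw [permWord_length]
  have key : ∀ i ∈ Finset.range (n - 2),
      (((permWord (Phi S)).getD (i + 1) 0 < (permWord (Phi S)).getD i 0 ∧
        (permWord (Phi S)).getD (i + 2) 0 < (permWord (Phi S)).getD (i + 1) 0) ↔
       n - S.card - 1 ≤ i) := by
    intro i hi
    rw [Finset.mem_range] at hi
    have h2 : i + 2 < n := by omega
    have h1 : i + 1 < n := by omega
    have h0 : i < n := by omega
    rw [permWord_getD _ i h0, permWord_getD _ (i+1) h1, permWord_getD _ (i+2) h2]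
    have c1 : (Phi S ⟨i, h0⟩ < Phi S ⟨i+1, h1⟩) ↔ i + 1 < n - S.card := Phi_succ_iff hn S hS h1
    have c2 : (Phi S ⟨i+1, h1⟩ < Phi S ⟨i+2, h2⟩) ↔ i + 2 < n - S.card := Phi_succ_iff hn S hS h2
    have ne1 : Phi S ⟨i, h0⟩ ≠ Phi S ⟨i+1, h1⟩ := fun h =>
      absurd ((Phi S).injective h) (by simp)
    have ne2 : Phi S ⟨i+1, h1⟩ ≠ Phi S ⟨i+2, h2⟩ := fun h =>
      absurd ((Phi S).injective h) (by simp)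
    have tr1 := lt_trichotomy (Phi S ⟨i, h0⟩) (Phi S ⟨i+1, h1⟩)
    have tr2 := lt_trichotomy (Phi S ⟨i+1, h1⟩) (Phi S ⟨i+2, h2⟩)
    have v1 : (Phi S ⟨i, h0⟩ : ℕ) < Phi S ⟨i+1, h1⟩ ↔ i + 1 < n - S.card := c1
    have v2 : (Phi S ⟨i+1, h1⟩ : ℕ) < Phi S ⟨i+2, h2⟩ ↔ i + 2 < n - S.card := c2
    have w1 : (Phi S ⟨i, h0⟩ : ℕ) ≠ Phi S ⟨i+1, h1⟩ := fun h => ne1 (Fin.ext h)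
    have w2 : (Phi S ⟨i+1, h1⟩ : ℕ) ≠ Phi S ⟨i+2, h2⟩ := fun h => ne2 (Fin.ext h)
    omega
  rw [Finset.filter_congr key]
  have : Finset.filter (fun i => n - S.card - 1 ≤ i) (Finset.range (n - 2)) =
      Finset.Ico (n - S.card - 1) (n - 2) := by
    ext x
    simp only [Finset.mem_filter, Finset.mem_range, Finset.mem_Ico]
    omega
  rw [this, Nat.card_Ico]

lemma recover_Phi (hn : 1 ≤ n) (S : Finset (Fin n)) (hS : HTop S) :
    Finset.image (Phi S) (Finset.Ioi ((Phi S).symm ⟨n - 1, by omega⟩)) = S := by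
  classical
  have hd := htop_card_le hn hS
  have hsymm : (Phi S).symm ⟨n - 1, by omega⟩ = ⟨n - S.card - 1, by omega⟩ := by
    rw [Equiv.symm_apply_eq]
    exact (phiFun_last hn S hS).symm
  rw [hsymm]
  ext v
  simp only [Finset.mem_image, Finset.mem_Ioi]
  constructor
  · rintro ⟨i, hi, rfl⟩
    have hival : n - S.card - 1 < (i : ℕ) := hi
    exact phiFun_mem_neg S i (by omega)
  · intro hv
    have : v ∈ Set.range (S.orderEmbOfFin rfl) := by
      rw [Finset.range_orderEmbOfFin]; exact hv
    obtain ⟨m, hm⟩ := this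
    have hmlt : (m : ℕ) < S.card := m.isLt
    refine ⟨⟨n - 1 - m, by omega⟩, ?_, ?_⟩
    · exact Fin.mk_lt_mk.mpr (by omega)
    · rw [Phi_apply, phiFun_neg S _ (by simp; omega)]
      convert hm using 2
      apply Fin.ext
      simp
      omega

lemma exists_Phi (hn : 1 ≤ n) (π : Equiv.Perm (Fin n)) (hπ : NoPat π) :
    ∃ S : Finset (Fin n), HTop S ∧ Phi S = π := by
  classical
  set t : Fin n := ⟨n - 1, by omega⟩ with ht
  set p : Fin n := π.symm t with hp
  have hπp : π p = t := π.apply_symm_apply t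
  have htval : (t : ℕ) = n - 1 := rfl
  set S : Finset (Fin n) := Finset.image π (Finset.Ioi p) with hSdef
  have hlt_t : ∀ x : Fin n, x ≠ t → x < t := by
    intro x hx
    have h1 := val_le_sub_one x
    have h2 : (x : ℕ) ≠ n - 1 := fun h => hx (Fin.ext (h.trans htval.symm))
    exact Fin.lt_def.mpr (by omega)
  have htop : HTop S := by
    intro x hx
    rw [hSdef, Finset.mem_image] at hx
    obtain ⟨i, hi, rfl⟩ := hx
    rw [Finset.mem_Ioi] at hi
    have hne : π i ≠ t := by
      intro h
      exact absurd (π.injective (h.trans hπp.symm)) (ne_of_gt hi)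
    have h3 := hlt_t (π i) hne
    have h4 : (π i : ℕ) < (t : ℕ) := h3
    omega
  have hcard : S.card = n - 1 - p := by
    rw [hSdef, Finset.card_image_of_injective _ π.injective, Fin.card_Ioi]
  have hnd : n - S.card = (p : ℕ) + 1 := by
    have := p.isLt; omega
  have incr : ∀ a b : Fin n, a < b → b ≤ p → π a < π b := by
    intro a b hab hbp
    rcases lt_trichotomy (π a) (π b) with h | h | h
    · exact h
    · exact absurd (π.injective h) (ne_of_lt hab)
    · exfalso
      have hane : π a ≠ t := fun hh =>
        absurd (π.injective (hh.trans hπp.symm)) (ne_of_lt (lt_of_lt_of_le hab hbp))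
      rcases eq_or_lt_of_le hbp with hbp' | hbp'
      · subst hbp'
        rw [hπp] at h
        exact absurd h (not_lt_of_gt (hlt_t (π a) hane))
      · have hbt : π b < π p := by
          rw [hπp]
          exact hlt_t (π b) (fun hh => absurd (π.injective (hh.trans hπp.symm)) (ne_of_lt hbp'))
        exact hπ a b p hab hbp' h hbt
  have decr : ∀ a b : Fin n, p ≤ a → a < b → π b < π a := by
    intro a b hpa hab
    rcases lt_trichotomy (π b) (π a) with h | h | h
    · exact h
    · exact absurd (π.injective h) (ne_of_gt hab)
    · exfalso
      have hbne : π b ≠ t := fun hh =>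
        absurd (π.injective (hh.trans hπp.symm)) (ne_of_gt (lt_of_le_of_lt hpa hab))
      rcases eq_or_lt_of_le hpa with hpa' | hpa'
      · subst hpa'
        rw [hπp] at h
        exact absurd h (not_lt_of_gt (hlt_t (π b) hbne))
      · have hat : π a < π p := by
          rw [hπp]
          exact hlt_t (π a) (fun hh => absurd (π.injective (hh.trans hπp.symm)) (ne_of_gt hpa'))
        exact hπ p a b hpa' hab hat h
  refine ⟨S, htop, ?_⟩
  have hcc : Sᶜ.card = n - S.card := card_compl' S
  have hSmem : ∀ x : Fin n, x ∈ S ↔ ∃ j, p < j ∧ π j = x := by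
    intro x
    rw [hSdef, Finset.mem_image]
    constructor
    · rintro ⟨j, hj, hjeq⟩; exact ⟨j, Finset.mem_Ioi.mp hj, hjeq⟩
    · rintro ⟨j, hj, hjeq⟩; exact ⟨j, Finset.mem_Ioi.mpr hj, hjeq⟩
  have fmem : ∀ m : Fin (n - S.card), π ⟨(m : ℕ), by have := m.isLt; omega⟩ ∈ Sᶜ := by
    intro m
    rw [Finset.mem_compl, hSmem]
    rintro ⟨j, hj, hjeq⟩
    have hinj := π.injective hjeq
    have hj' : (p : ℕ) < (j : ℕ) := hj
    have hm : (m : ℕ) < n - S.card := m.isLt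
    rw [hinj] at hj'
    simp only [Fin.val_mk] at hj'
    omega
  have fmono : StrictMono (fun m : Fin (n - S.card) => π ⟨(m : ℕ), by have := m.isLt; omega⟩) := by
    intro a b hab
    apply incr
    · exact Fin.mk_lt_mk.mpr hab
    · have : (b : ℕ) < n - S.card := b.isLt
      exact Fin.le_def.mpr (by simp only [Fin.val_mk]; omega)
  have fEq := Finset.orderEmbOfFin_unique hcc fmem fmono
  have gmem : ∀ m : Fin S.card, π ⟨n - 1 - (m : ℕ), by have := m.isLt; omega⟩ ∈ S := by
    intro m
    rw [hSmem]
    refine ⟨⟨n - 1 - (m : ℕ), by have := m.isLt; omega⟩, ?_, rfl⟩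
    have hm : (m : ℕ) < S.card := m.isLt
    exact Fin.lt_def.mpr (by simp only [Fin.val_mk]; omega)
  have gmono : StrictMono (fun m : Fin S.card => π ⟨n - 1 - (m : ℕ), by have := m.isLt; omega⟩) := by
    intro a b hab
    have ha : (a : ℕ) < S.card := a.isLt
    have hb : (b : ℕ) < S.card := b.isLt
    have hab' : (a : ℕ) < b := hab
    apply decr
    · exact Fin.le_def.mpr (by simp; omega)
    · exact Fin.mk_lt_mk.mpr (by omega)
  have gEq := Finset.orderEmbOfFin_unique (rfl : S.card = S.card) gmem gmono
  apply Equiv.ext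
  intro i
  rw [Phi_apply]
  by_cases hi : (i : ℕ) < n - S.card
  · rw [phiFun_pos S i hi, ← fEq]
  · rw [phiFun_neg S i hi, ← gEq]
    simp only []
    congr 1
    apply Fin.ext
    simp only []
    have h1 := i.isLt
    have h2 : n - 1 - (n - 1 - (i : ℕ)) = (i : ℕ) := by omega
    exact h2

lemma acount_eq (hn : 1 ≤ n) (stat : List ℕ → ℕ) (F : ℕ → ℕ)
    (hstat : ∀ S : Finset (Fin n), HTop S → stat (permWord (Phi S)) = F S.card) (k : ℕ) :
    acount n k stat [[2,1,3],[3,1,2]]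
    = (Finset.univ.filter fun S : Finset (Fin n) => HTop S ∧ F S.card = k).card := by
  classical
  rw [acount]
  have himg : (Finset.univ.filter fun π : Equiv.Perm (Fin n) =>
      AvoidsAll (permWord π) [[2,1,3],[3,1,2]] ∧ stat (permWord π) = k)
      = Finset.image Phi (Finset.univ.filter fun S : Finset (Fin n) => HTop S ∧ F S.card = k) := by
    ext π
    simp only [Finset.mem_filter, Finset.mem_image, Finset.mem_univ, true_and]
    constructor
    · rintro ⟨hA, hk⟩
      obtain ⟨S, hS, rfl⟩ := exists_Phi hn π ((avoids_iff π).mp hA)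
      exact ⟨S, ⟨hS, by rw [← hstat S hS]; exact hk⟩, rfl⟩
    · rintro ⟨S, ⟨hS, hF⟩, rfl⟩
      exact ⟨(avoids_iff _).mpr (noPat_Phi S), by rw [hstat S hS, hF]⟩
  rw [himg, Finset.card_image_of_injOn]
  intro S hS S' hS' hPhi
  simp only [Finset.coe_filter, Set.mem_setOf_eq, Finset.mem_univ, true_and] at hS hS'
  have hrec := recover_Phi hn S hS.1
  rw [hPhi] at hrec
  rw [recover_Phi hn S' hS'.1] at hrec
  exact hrec.symm

lemma htop_card_count (hn : 1 ≤ n) (c : ℕ) :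
    (Finset.univ.filter fun S : Finset (Fin n) => HTop S ∧ S.card = c).card
      = (n - 1).choose c := by
  classical
  set U : Finset (Fin n) := Finset.univ.filter (fun x => (x : ℕ) < n - 1) with hU
  have hUmem : ∀ x : Fin n, x ∈ U ↔ (x : ℕ) < n - 1 := by
    intro x; simp [hU]
  have hUcard : U.card = n - 1 := by
    have hUc : U = ({(⟨n - 1, by omega⟩ : Fin n)} : Finset (Fin n))ᶜ := by
      ext x
      rw [hUmem, Finset.mem_compl, Finset.mem_singleton]
      have := x.isLt
      rw [Fin.ext_iff]
      simp only [Fin.val_mk]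
      omega
    rw [hUc, Finset.card_compl, Finset.card_singleton, Fintype.card_fin]
  have hflt : (Finset.univ.filter fun S : Finset (Fin n) => HTop S ∧ S.card = c)
      = Finset.powersetCard c U := by
    ext S
    simp only [Finset.mem_filter, Finset.mem_univ, true_and, Finset.mem_powersetCard]
    constructor
    · rintro ⟨h1, h2⟩
      exact ⟨fun x hx => (hUmem x).mpr (h1 x hx), h2⟩
    · rintro ⟨h1, h2⟩
      exact ⟨fun x hx => (hUmem x).mp (h1 hx), h2⟩
  rw [hflt, Finset.card_powersetCard, hUcard]

lemma count_pred (hn : 1 ≤ n) (F : ℕ → ℕ) (k c : ℕ)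
    (hP : ∀ m, m ≤ n - 1 → (F m = k ↔ m = c)) :
    (Finset.univ.filter fun S : Finset (Fin n) => HTop S ∧ F S.card = k).card
      = (n - 1).choose c := by
  classical
  have : (Finset.univ.filter fun S : Finset (Fin n) => HTop S ∧ F S.card = k)
       = (Finset.univ.filter fun S : Finset (Fin n) => HTop S ∧ S.card = c) := by
    ext S
    simp only [Finset.mem_filter, Finset.mem_univ, true_and]
    constructor
    · rintro ⟨h1, h2⟩; exact ⟨h1, (hP _ (htop_card_le hn h1)).mp h2⟩
    · rintro ⟨h1, h2⟩; exact ⟨h1, (hP _ (htop_card_le hn h1)).mpr h2⟩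
  rw [this, htop_card_count hn c]

lemma count_pred2 (hn : 1 ≤ n) (F : ℕ → ℕ) (k c₁ c₂ : ℕ) (hne : c₁ ≠ c₂)
    (hP : ∀ m, m ≤ n - 1 → (F m = k ↔ (m = c₁ ∨ m = c₂))) :
    (Finset.univ.filter fun S : Finset (Fin n) => HTop S ∧ F S.card = k).card
      = (n - 1).choose c₁ + (n - 1).choose c₂ := by
  classical
  have hsplit : (Finset.univ.filter fun S : Finset (Fin n) => HTop S ∧ F S.card = k)
       = (Finset.univ.filter fun S : Finset (Fin n) => HTop S ∧ S.card = c₁)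
         ∪ (Finset.univ.filter fun S : Finset (Fin n) => HTop S ∧ S.card = c₂) := by
    ext S
    simp only [Finset.mem_filter, Finset.mem_union, Finset.mem_univ, true_and]
    constructor
    · rintro ⟨h1, h2⟩
      rcases (hP _ (htop_card_le hn h1)).mp h2 with h | h
      · exact Or.inl ⟨h1, h⟩
      · exact Or.inr ⟨h1, h⟩
    · rintro (⟨h1, h2⟩ | ⟨h1, h2⟩)
      · exact ⟨h1, (hP _ (htop_card_le hn h1)).mpr (Or.inl h2)⟩
      · exact ⟨h1, (hP _ (htop_card_le hn h1)).mpr (Or.inr h2)⟩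
  rw [hsplit, Finset.card_union_of_disjoint, htop_card_count hn c₁, htop_card_count hn c₂]
  rw [Finset.disjoint_left]
  intro S hS1 hS2
  rw [Finset.mem_filter] at hS1 hS2
  exact hne (hS1.2.2.symm.trans hS2.2.2)

theorem stmt7' (hn : 1 ≤ n) :
    (acount n 0 dascents [[2,1,3],[3,1,2]] = n ∧
      ∀ k, 1 ≤ k → acount n k dascents [[2,1,3],[3,1,2]] = Nat.choose (n - 1) (k + 1)) ∧
    (acount n 0 ddescents [[2,1,3],[3,1,2]] = n ∧
      ∀ k, 1 ≤ k → acount n k ddescents [[2,1,3],[3,1,2]] = Nat.choose (n - 1) (k + 1)) := by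
  have hdasc : ∀ k : ℕ, acount n k dascents [[2,1,3],[3,1,2]]
      = (Finset.univ.filter fun S : Finset (Fin n) => HTop S ∧ n - S.card - 2 = k).card :=
    fun k => acount_eq hn dascents (fun c => n - c - 2) (fun S hS => dasc_Phi hn S hS) k
  have hddes : ∀ k : ℕ, acount n k ddescents [[2,1,3],[3,1,2]]
      = (Finset.univ.filter fun S : Finset (Fin n) => HTop S ∧ (n - 2) - (n - S.card - 1) = k).card :=
    fun k => acount_eq hn ddescents (fun c => (n - 2) - (n - c - 1)) (fun S hS => ddes_Phi hn S hS) k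
  refine ⟨⟨?_, ?_⟩, ⟨?_, ?_⟩⟩
  · rw [hdasc 0]
    rcases Nat.lt_or_ge n 2 with h2 | h2
    · have hn1 : n = 1 := by omega
      subst hn1
      exact (count_pred (by omega) (fun c => 1 - c - 2) 0 0 (by intro m hm; omega)).trans rfl
    · refine (count_pred2 hn (fun c => n - c - 2) 0 (n - 2) (n - 1) (by omega)
        (by intro m hm; constructor <;> intro h <;> omega)).trans ?_
      have e1 : (n - 1).choose (n - 2) = n - 1 := by
        rw [show n - 2 = (n - 1) - 1 by omega, Nat.choose_symm (by omega), Nat.choose_one_right]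
      rw [e1, Nat.choose_self]
      omega
  · intro k hk
    rw [hdasc k]
    rcases Nat.lt_or_ge n (k + 2) with h2 | h2
    · refine (count_pred hn (fun c => n - c - 2) k n
        (by intro m hm; constructor <;> intro h <;> omega)).trans ?_
      rw [Nat.choose_eq_zero_of_lt (by omega), Nat.choose_eq_zero_of_lt (by omega)]
    · refine (count_pred hn (fun c => n - c - 2) k (n - 2 - k)
        (by intro m hm; constructor <;> intro h <;> omega)).trans ?_
      rw [show n - 2 - k = (n - 1) - (k + 1) by omega, Nat.choose_symm (by omega)]
  · rw [hddes 0]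
    refine (count_pred2 hn (fun c => (n - 2) - (n - c - 1)) 0 0 1 (by omega)
      (by intro m hm; constructor <;> intro h <;> omega)).trans ?_
    rw [Nat.choose_zero_right, Nat.choose_one_right]
    omega
  · intro k hk
    rw [hddes k]
    exact count_pred hn (fun c => (n - 2) - (n - c - 1)) k (k + 1)
      (by intro m hm; constructor <;> intro h <;> omega)

end Stmt7aux

theorem stmt7 (n : ℕ) (hn : 1 ≤ n) :
    (acount n 0 dascents [[2,1,3],[3,1,2]] = n ∧
      ∀ k, 1 ≤ k → acount n k dascents [[2,1,3],[3,1,2]] = Nat.choose (n - 1) (k + 1)) ∧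
    (acount n 0 ddescents [[2,1,3],[3,1,2]] = n ∧
      ∀ k, 1 ≤ k → acount n k ddescents [[2,1,3],[3,1,2]] = Nat.choose (n - 1) (k + 1)) := by
  exact Stmt7aux.stmt7' hn
end

section
/- For all n ≥ 1 and k ≥ 0, the quantities a_{n,k}^{dasc}(132,213), a_{n,k}^{ddes}(132,213), a_{n,k}^{dasc}(213,231), and a_{n,k}^{ddes}(213,231) are all equal, and each equals the number of binary sequences of length n−1 with exactly k occurrences of 00 as a consecutive factor. -/
open scoped Classical

/-- The number of occurrences of `00` as a consecutive factor of a binary word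
(`false` = 0, `true` = 1). -/
noncomputable def zzFactors (s : List Bool) : ℕ :=
  ((Finset.range (s.length - 1)).filter fun i =>
    s.getD i true = false ∧ s.getD (i + 1) true = false).card

/-- The number of binary sequences of length `m` with exactly `k` occurrences of `00`
as a consecutive factor. -/
noncomputable def binCount (m k : ℕ) : ℕ :=
  (Finset.univ.filter fun s : Fin m → Bool => zzFactors (List.ofFn s) = k).card

/-! In both classes a permutation avoiding the two patterns is determined by its descent word,
and every binary word of length `n - 1` is the descent word of one of them: avoiders of `132`
and `213` are the skew sums of increasing runs of consecutive values, avoiders of `213` and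
`231` are those in which each entry is the least or the greatest of the entries from it on.
Writing `0` for an ascent and `1` for a descent, double ascents are the factors `00` of the
descent word and double descents the factors `00` of its complement. The avoider with a given
descent word is obtained as the permutation in the same relative order as an explicit key. -/

namespace PatternAvoidance

open Finset

variable {n m : ℕ}

section Entries

variable (π : Equiv.Perm (Fin n))

def entry (i : ℕ) : ℕ := (permWord π).getD i 0

@[simp]
lemma length_permWord : (permWord π).length = n := by
  simp [permWord]

lemma entry_of_lt {i : ℕ} (hi : i < n) : entry π i = π ⟨i, hi⟩ + 1 := by
  rw [entry, List.getD_eq_getElem _ _ (by simpa using hi)]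
  simp [permWord]

lemma entry_lt_entry_iff {i j : ℕ} (hi : i < n) (hj : j < n) :
    entry π i < entry π j ↔ π ⟨i, hi⟩ < π ⟨j, hj⟩ := by
  rw [entry_of_lt π hi, entry_of_lt π hj, Fin.lt_def]
  omega

lemma entry_ne_entry {i j : ℕ} (hi : i < n) (hj : j < n) (hij : i ≠ j) :
    entry π i ≠ entry π j := by
  rw [entry_of_lt π hi, entry_of_lt π hj]
  intro h
  exact hij (Fin.mk.inj_iff.1 (π.injective (Fin.ext (by omega))))

end Entries

lemma perm_eq_of_lt_iff {π σ : Equiv.Perm (Fin n)} (h : ∀ x y, π x < π y ↔ σ x < σ y) :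
    π = σ := by
  have hσπ : StrictMono (σ ∘ π.symm) := fun x y hxy => by
    simpa [← h] using hxy
  have hπσ : StrictMono (π ∘ σ.symm) := fun x y hxy => by
    simpa [h] using hxy
  have hfix : ∀ y, σ (π.symm y) = y := fun y =>
    le_antisymm (by simpa using hπσ.id_le (σ (π.symm y))) (hσπ.id_le y)
  ext x
  simpa using congrArg Fin.val (hfix (π x)).symm

def Realizes {α : Type*} [LinearOrder α] (π : Equiv.Perm (Fin n)) (f : ℕ → α) : Prop :=
  ∀ i j, i < n → j < n → (entry π i < entry π j ↔ f i < f j)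

section Realizes

variable {α : Type*} [LinearOrder α] {π σ : Equiv.Perm (Fin n)} {f : ℕ → α}

lemma realizes_of_lt (hf : Set.InjOn f (Set.Iio n))
    (h : ∀ i j, i < j → j < n → (entry π i < entry π j ↔ f i < f j)) : Realizes π f := by
  intro i j hi hj
  rcases lt_trichotomy i j with hij | rfl | hji
  · exact h i j hij hj
  · simp
  · have hne : f i ≠ f j := fun e => hji.ne' (hf hi hj e)
    have hne' := entry_ne_entry π hi hj hji.ne'
    rw [← Ne.le_iff_lt hne', ← Ne.le_iff_lt hne, ← not_lt, ← not_lt, h j i hji hi]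

lemma Realizes.eq (hπ : Realizes π f) (hσ : Realizes σ f) : π = σ :=
  perm_eq_of_lt_iff fun x y => by
    rw [← entry_lt_entry_iff π x.isLt y.isLt, ← entry_lt_entry_iff σ x.isLt y.isLt,
      hπ _ _ x.isLt y.isLt, hσ _ _ x.isLt y.isLt]

lemma exists_realizes (hf : Set.InjOn f (Set.Iio n)) :
    ∃ π : Equiv.Perm (Fin n), Realizes π f := by
  set g : Fin n → α := fun i => f i
  have hg : Function.Injective g := fun x y h => Fin.ext (hf x.isLt y.isLt h)
  have hmono : StrictMono (g ∘ Tuple.sort g) :=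
    (Tuple.monotone_sort g).strictMono_of_injective (hg.comp (Tuple.sort g).injective)
  refine ⟨(Tuple.sort g).symm, fun i j hi hj => ?_⟩
  rw [entry_lt_entry_iff _ hi hj, ← hmono.lt_iff_lt]
  simp [g]

end Realizes

section Patterns

variable (π : Equiv.Perm (Fin n))

lemma containsPat_permWord_iff {a b c : ℕ} (hab : a ≠ b) (hac : a ≠ c) (hbc : b ≠ c) :
    ContainsPat (permWord π) [a, b, c] ↔ ∃ i j k, i < j ∧ j < k ∧ k < n ∧
      (a < b ↔ entry π i < entry π j) ∧ (a < c ↔ entry π i < entry π k) ∧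
      (b < c ↔ entry π j < entry π k) := by
  have hget : ∀ x (hx : x < (permWord π).length), (permWord π)[x] = entry π x := fun _ hx =>
    (List.getD_eq_getElem _ _ hx).symm
  constructor
  · rintro ⟨f, hf, hcmp⟩
    refine ⟨f 0, f 1, f 2, hf (by rw [Fin.lt_def]; simp), hf (by rw [Fin.lt_def]; simp),
      by simpa using (f 2).isLt, ?_⟩
    simp only [List.get_eq_getElem, hget] at hcmp
    exact ⟨hcmp 0 1, hcmp 0 2, hcmp 1 2⟩
  · rintro ⟨i, j, k, hij, hjk, hk, h01, h02, h12⟩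
    have hlen : k < (permWord π).length := by simpa using hk
    refine ⟨![⟨i, by omega⟩, ⟨j, by omega⟩, ⟨k, hlen⟩],
      Fin.strictMono_iff_lt_succ.2 fun x => by fin_cases x <;> simpa [Fin.lt_def], ?_⟩
    have hij' := entry_ne_entry π (by omega) (by omega) hij.ne
    have hik' := entry_ne_entry π (by omega) hk (by omega : i ≠ k)
    have hjk' := entry_ne_entry π (by omega) hk hjk.ne
    intro x y
    fin_cases x <;> fin_cases y <;> simp [hget] <;> grind

lemma avoidsAll_132_213_iff : AvoidsAll (permWord π) [[1, 3, 2], [2, 1, 3]] ↔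
    ∀ i j k, i < j → j < k → k < n →
      ¬(entry π i < entry π k ∧ entry π k < entry π j) ∧
      ¬(entry π j < entry π i ∧ entry π i < entry π k) := by
  simp only [AvoidsAll, List.mem_cons, List.not_mem_nil, or_false, forall_eq_or_imp, forall_eq,
    containsPat_permWord_iff π (a := 1) (b := 3) (c := 2) (by decide) (by decide) (by decide),
    containsPat_permWord_iff π (a := 2) (b := 1) (c := 3) (by decide) (by decide) (by decide),
    not_exists, not_and, (by decide : (1 : ℕ) < 3), (by decide : (1 : ℕ) < 2),
    (by decide : (2 : ℕ) < 3), (by decide : ¬(3 : ℕ) < 2), (by decide : ¬(2 : ℕ) < 1),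
    true_iff, false_iff, not_not, ← forall_and]
  refine forall₃_congr fun i j k => imp_congr_right fun hij => imp_congr_right fun hjk =>
    imp_congr_right fun hk => ?_
  have := entry_ne_entry π (by omega) (by omega) hij.ne
  have := entry_ne_entry π (by omega) hk (by omega : i ≠ k)
  have := entry_ne_entry π (by omega) hk hjk.ne
  omega

lemma avoidsAll_213_231_iff : AvoidsAll (permWord π) [[2, 1, 3], [2, 3, 1]] ↔
    ∀ i j k, i < j → j < k → k < n →
      ¬(entry π j < entry π i ∧ entry π i < entry π k) ∧
      ¬(entry π k < entry π i ∧ entry π i < entry π j) := by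
  simp only [AvoidsAll, List.mem_cons, List.not_mem_nil, or_false, forall_eq_or_imp, forall_eq,
    containsPat_permWord_iff π (a := 2) (b := 1) (c := 3) (by decide) (by decide) (by decide),
    containsPat_permWord_iff π (a := 2) (b := 3) (c := 1) (by decide) (by decide) (by decide),
    not_exists, not_and, (by decide : (1 : ℕ) < 3), (by decide : (2 : ℕ) < 3),
    (by decide : ¬(2 : ℕ) < 1), (by decide : ¬(3 : ℕ) < 1), true_iff, false_iff, not_not,
    ← forall_and]
  refine forall₃_congr fun i j k => imp_congr_right fun hij => imp_congr_right fun hjk =>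
    imp_congr_right fun hk => ?_
  have := entry_ne_entry π (by omega) (by omega) hij.ne
  have := entry_ne_entry π (by omega) hk (by omega : i ≠ k)
  have := entry_ne_entry π (by omega) hk hjk.ne
  omega

end Patterns

def descentWord (π : Equiv.Perm (Fin (m + 1))) : Fin m → Bool :=
  fun i => decide (entry π (i + 1) < entry π i)

def bitAt (s : Fin m → Bool) (i : ℕ) : Bool :=
  if h : i < m then s ⟨i, h⟩ else false

lemma bitAt_of_lt (s : Fin m → Bool) {i : ℕ} (h : i < m) : bitAt s i = s ⟨i, h⟩ := dif_pos h

lemma lt_of_bitAt_eq_true {s : Fin m → Bool} {i : ℕ} (h : bitAt s i = true) : i < m := by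
  by_contra hi
  simp [bitAt, hi] at h

lemma getD_ofFn_eq_bitAt (s : Fin m → Bool) {i : ℕ} (h : i < m) (d : Bool) :
    (List.ofFn s).getD i d = bitAt s i := by
  rw [List.getD_eq_getElem _ _ (by simpa using h), List.getElem_ofFn, bitAt_of_lt s h]

lemma bitAt_not {s : Fin m → Bool} {i : ℕ} (h : i < m) :
    bitAt (fun j => !s j) i = !bitAt s i := by
  simp [bitAt_of_lt _ h]

section DescentWord

variable (π : Equiv.Perm (Fin (m + 1)))

lemma bitAt_descentWord_eq_true {i : ℕ} (hi : i < m) :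
    bitAt (descentWord π) i = true ↔ entry π (i + 1) < entry π i := by
  simp [bitAt_of_lt _ hi, descentWord]

lemma bitAt_descentWord_eq_false {i : ℕ} (hi : i < m) :
    bitAt (descentWord π) i = false ↔ entry π i < entry π (i + 1) := by
  have := entry_ne_entry π (by omega : i < m + 1) (by omega : i + 1 < m + 1) (by omega)
  rw [← Bool.not_eq_true, bitAt_descentWord_eq_true π hi]
  omega

lemma dascents_permWord : dascents (permWord π) = zzFactors (List.ofFn (descentWord π)) := by
  rw [dascents, zzFactors, length_permWord, List.length_ofFn, show m + 1 - 2 = m - 1 by omega]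
  refine congrArg card (filter_congr fun i hi => ?_)
  rw [mem_range] at hi
  rw [getD_ofFn_eq_bitAt _ (by omega), getD_ofFn_eq_bitAt _ (by omega),
    bitAt_descentWord_eq_false π (by omega), bitAt_descentWord_eq_false π (by omega)]
  rfl

lemma ddescents_permWord :
    ddescents (permWord π) = zzFactors (List.ofFn fun i => !descentWord π i) := by
  rw [ddescents, zzFactors, length_permWord, List.length_ofFn, show m + 1 - 2 = m - 1 by omega]
  refine congrArg card (filter_congr fun i hi => ?_)
  rw [mem_range] at hi
  rw [getD_ofFn_eq_bitAt _ (by omega), getD_ofFn_eq_bitAt _ (by omega),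
    bitAt_not (by omega), bitAt_not (by omega), Bool.not_eq_false', Bool.not_eq_false',
    bitAt_descentWord_eq_true π (by omega), bitAt_descentWord_eq_true π (by omega)]
  rfl

end DescentWord

lemma descentWord_eq_of_realizes {α : Type*} [LinearOrder α] {π : Equiv.Perm (Fin (m + 1))}
    {f : ℕ → α} {s : Fin m → Bool} (hπ : Realizes π f)
    (hf : ∀ i : Fin m, f (i + 1) < f i ↔ s i = true) : descentWord π = s := by
  funext i
  rw [Bool.eq_iff_iff, descentWord, decide_eq_true_iff, hπ _ _ (by omega) (by omega), hf]

lemma acount_eq_binCount_of_bijective (stat : List ℕ → ℕ) (B : List (List ℕ))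
    (w : Equiv.Perm (Fin (m + 1)) → Fin m → Bool)
    (hstat : ∀ π, stat (permWord π) = zzFactors (List.ofFn (w π)))
    (hinj : ∀ π σ, AvoidsAll (permWord π) B → AvoidsAll (permWord σ) B →
      w π = w σ → π = σ)
    (hsurj : ∀ s, ∃ π, AvoidsAll (permWord π) B ∧ w π = s) (k : ℕ) :
    acount (m + 1) k stat B = binCount m k := by
  refine card_nbij w (fun π hπ => ?_) (fun π hπ σ hσ => ?_) (fun s hs => ?_)
  · simp only [coe_filter, mem_univ, true_and, Set.mem_ofPred_eq] at hπ ⊢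
    rw [← hstat]
    exact hπ.2
  · simp only [coe_filter, mem_univ, true_and, Set.mem_ofPred_eq] at hπ hσ
    exact hinj π σ hπ.1 hσ.1
  · simp only [coe_filter, mem_univ, true_and, Set.mem_ofPred_eq] at hs
    obtain ⟨π, hπ, rfl⟩ := hsurj s
    exact ⟨π, by simpa [hstat] using ⟨hπ, hs⟩, rfl⟩

theorem acount_eq_binCount_of_realizes {α : Type*} [LinearOrder α] (B : List (List ℕ))
    (key : (Fin m → Bool) → ℕ → α) (hinj : ∀ s, Set.InjOn (key s) (Set.Iio (m + 1)))
    (hdesc : ∀ s (i : Fin m), key s (i + 1) < key s i ↔ s i = true)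
    (havoids : ∀ s (π : Equiv.Perm (Fin (m + 1))), Realizes π (key s) →
      AvoidsAll (permWord π) B)
    (hrealizes : ∀ π : Equiv.Perm (Fin (m + 1)), AvoidsAll (permWord π) B →
      Realizes π (key (descentWord π))) (k : ℕ) :
    acount (m + 1) k dascents B = binCount m k ∧ acount (m + 1) k ddescents B = binCount m k := by
  have hinj' : ∀ π σ, AvoidsAll (permWord π) B → AvoidsAll (permWord σ) B →
      descentWord π = descentWord σ → π = σ := fun π σ hπ hσ h =>
    (hrealizes π hπ).eq (h ▸ hrealizes σ hσ)
  have hsurj : ∀ s, ∃ π, AvoidsAll (permWord π) B ∧ descentWord π = s := fun s => by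
    obtain ⟨π, hπ⟩ := exists_realizes (hinj s)
    exact ⟨π, havoids s π hπ, descentWord_eq_of_realizes hπ (hdesc s)⟩
  refine ⟨acount_eq_binCount_of_bijective _ B _ dascents_permWord hinj' hsurj k,
    acount_eq_binCount_of_bijective _ B _ ddescents_permWord (fun π σ hπ hσ h => ?_)
      (fun s => ?_) k⟩
  · exact hinj' π σ hπ hσ (funext fun i => by simpa using congrFun h i)
  · obtain ⟨π, hπ, hs⟩ := hsurj fun i => !s i
    exact ⟨π, hπ, funext fun i => by simp [hs]⟩

def descCount (s : Fin m → Bool) (i : ℕ) : ℕ := #{d ∈ range i | bitAt s d = true}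

section DescCount

variable (s : Fin m → Bool)

lemma descCount_succ (i : ℕ) : descCount s (i + 1) = descCount s i + (bitAt s i).toNat := by
  cases h : bitAt s i <;> simp [descCount, range_add_one, filter_insert, h]

lemma descCount_mono : Monotone (descCount s) :=
  monotone_nat_of_le_succ fun i => by rw [descCount_succ]; omega

lemma descCount_le (i : ℕ) : descCount s i ≤ i :=
  (card_filter_le _ _).trans (card_range i).le

end DescCount

/-- Avoiders of `132` and `213` are skew sums of increasing runs of consecutive values; the
key orders positions by run (later runs lower), then by position. -/
def reverseLayeredKey (s : Fin m → Bool) (i : ℕ) : ℕ ×ₗ ℕ := toLex (m - descCount s i, i)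

section ReverseLayered

variable (s : Fin m → Bool)

lemma reverseLayeredKey_lt_iff {i j : ℕ} (hij : i < j) (hj : j ≤ m) :
    reverseLayeredKey s i < reverseLayeredKey s j ↔ descCount s i = descCount s j := by
  have := descCount_mono s hij.le
  have := descCount_le s j
  rw [reverseLayeredKey, reverseLayeredKey, Prod.Lex.toLex_lt_toLex]
  omega

lemma reverseLayeredKey_injOn : Set.InjOn (reverseLayeredKey s) (Set.Iio (m + 1)) :=
  fun i _ j _ h => by simpa [reverseLayeredKey] using congrArg (fun x => (ofLex x).2) h

lemma reverseLayeredKey_succ_lt_iff (i : Fin m) :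
    reverseLayeredKey s (i + 1) < reverseLayeredKey s i ↔ s i = true := by
  have := descCount_le s i
  rw [reverseLayeredKey, reverseLayeredKey, Prod.Lex.toLex_lt_toLex, descCount_succ,
    bitAt_of_lt s i.isLt]
  cases s i <;> simp; omega

lemma avoidsAll_of_realizes_reverseLayeredKey {π : Equiv.Perm (Fin (m + 1))}
    (hπ : Realizes π (reverseLayeredKey s)) : AvoidsAll (permWord π) [[1, 3, 2], [2, 1, 3]] := by
  rw [avoidsAll_132_213_iff]
  intro i j k hij hjk hk
  have hdc := descCount_mono s (hij.trans hjk).le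
  have hdc' := descCount_mono s hij.le
  have hdc'' := descCount_mono s hjk.le
  rw [hπ i k (by omega) hk, hπ k j hk (by omega), hπ j i (by omega) (by omega)]
  refine ⟨fun ⟨hik, hkj⟩ => ?_, fun ⟨hji, hik⟩ => ?_⟩
  · rw [reverseLayeredKey_lt_iff s (hij.trans hjk) (by omega)] at hik
    exact lt_asymm hkj ((reverseLayeredKey_lt_iff s hjk (by omega)).2 (by omega))
  · rw [reverseLayeredKey_lt_iff s (hij.trans hjk) (by omega)] at hik
    exact lt_asymm hji ((reverseLayeredKey_lt_iff s hij (by omega)).2 (by omega))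

end ReverseLayered

section Avoiders132213

variable {π : Equiv.Perm (Fin (m + 1))}

lemma entry_order_of_avoids_132_213 (hA : AvoidsAll (permWord π) [[1, 3, 2], [2, 1, 3]])
    {i j : ℕ} (hij : i ≤ j) (hj : j ≤ m) :
    (descCount (descentWord π) i = descCount (descentWord π) j → entry π i ≤ entry π j) ∧
    (descCount (descentWord π) i < descCount (descentWord π) j → entry π j < entry π i) := by
  rw [avoidsAll_132_213_iff] at hA
  induction j, hij using Nat.le_induction with
  | base => simp
  | succ j hij ih =>
    obtain ⟨ih₁, ih₂⟩ := ih (by omega)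
    have hjm : j < m := by omega
    have := descCount_mono (descentWord π) hij
    rw [descCount_succ]
    cases hbit : bitAt (descentWord π) j
    · have hasc := (bitAt_descentWord_eq_false π hjm).1 hbit
      refine ⟨fun h => (ih₁ (by simpa using h)).trans hasc.le, fun h => ?_⟩
      rcases hij.eq_or_lt with rfl | hij
      · simp at h
      · have := entry_ne_entry π (by omega) (by omega) (by omega : i ≠ j + 1)
        -- otherwise `i, j, j + 1` is an occurrence of `213`
        have := (hA i j (j + 1) hij (by omega) (by omega)).2
        have := ih₂ (by simpa using h)
        omega
    · have hdesc := (bitAt_descentWord_eq_true π hjm).1 hbit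
      refine ⟨fun h => by simp at h; omega, fun h => ?_⟩
      rcases (Nat.lt_succ_iff.1 (by simpa using h)).eq_or_lt with heq | hlt
      · rcases hij.eq_or_lt with rfl | hij
        · exact hdesc
        · have := entry_ne_entry π (by omega) (by omega) (by omega : i ≠ j + 1)
          have := entry_ne_entry π (by omega) (by omega) hij.ne
          -- otherwise `i, j, j + 1` is an occurrence of `132`
          have := (hA i j (j + 1) hij (by omega) (by omega)).1
          have := ih₁ heq
          omega
      · have := ih₂ hlt
        omega

lemma entry_lt_entry_iff_of_avoids_132_213 (hA : AvoidsAll (permWord π) [[1, 3, 2], [2, 1, 3]])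
    {i j : ℕ} (hij : i < j) (hj : j ≤ m) :
    entry π i < entry π j ↔ descCount (descentWord π) i = descCount (descentWord π) j := by
  obtain ⟨h₁, h₂⟩ := entry_order_of_avoids_132_213 hA hij.le hj
  have := entry_ne_entry π (by omega) (by omega) hij.ne
  have := descCount_mono (descentWord π) hij.le
  constructor
  · intro h
    by_contra hne
    have := h₂ (by omega)
    omega
  · intro h
    have := h₁ h
    omega

lemma realizes_reverseLayeredKey_of_avoids
    (hA : AvoidsAll (permWord π) [[1, 3, 2], [2, 1, 3]]) :
    Realizes π (reverseLayeredKey (descentWord π)) :=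
  realizes_of_lt (reverseLayeredKey_injOn _) fun i j hij hj => by
    rw [entry_lt_entry_iff_of_avoids_132_213 hA hij (by omega),
      reverseLayeredKey_lt_iff _ hij (by omega)]

end Avoiders132213

/-- In an avoider of `213` and `231` every entry is the least or the greatest of the entries from
it onwards, according as it is followed by an ascent or a descent; so the key puts the first kind
of positions in increasing order below the second kind in decreasing order. -/
def minMaxKey (s : Fin m → Bool) (i : ℕ) : ℕ := if bitAt s i then 2 * m - i else i

section MinMax

variable (s : Fin m → Bool)

lemma minMaxKey_lt_iff {i j : ℕ} (hij : i < j) (hj : j ≤ m) :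
    minMaxKey s i < minMaxKey s j ↔ bitAt s i = false := by
  have hi' : bitAt s i = true → i < m := lt_of_bitAt_eq_true
  have hj' : bitAt s j = true → j < m := lt_of_bitAt_eq_true
  revert hi' hj'
  unfold minMaxKey
  cases bitAt s i <;> cases bitAt s j <;> simp <;> omega

lemma minMaxKey_injOn : Set.InjOn (minMaxKey s) (Set.Iio (m + 1)) := by
  intro i hi j hj h
  have hi' : bitAt s i = true → i < m := lt_of_bitAt_eq_true
  have hj' : bitAt s j = true → j < m := lt_of_bitAt_eq_true
  revert h hi' hj'
  simp only [Set.mem_Iio] at hi hj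
  unfold minMaxKey
  cases bitAt s i <;> cases bitAt s j <;> simp <;> omega

lemma minMaxKey_succ_lt_iff (i : Fin m) :
    minMaxKey s (i + 1) < minMaxKey s i ↔ s i = true := by
  have hi := i.isLt
  have hsucc : bitAt s (i + 1) = true → i + 1 < m := lt_of_bitAt_eq_true
  rw [← bitAt_of_lt s hi]
  revert hsucc
  unfold minMaxKey
  cases bitAt s i <;> cases bitAt s (i + 1) <;> simp <;> omega

lemma avoidsAll_of_realizes_minMaxKey {π : Equiv.Perm (Fin (m + 1))}
    (hπ : Realizes π (minMaxKey s)) : AvoidsAll (permWord π) [[2, 1, 3], [2, 3, 1]] := by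
  rw [avoidsAll_213_231_iff]
  intro i j k hij hjk hk
  rw [hπ j i (by omega) (by omega), hπ i k (by omega) hk, hπ k i hk (by omega),
    hπ i j (by omega) (by omega), minMaxKey_lt_iff s hij (by omega),
    minMaxKey_lt_iff s (hij.trans hjk) (by omega)]
  refine ⟨fun ⟨hji, hi⟩ => lt_asymm hji ((minMaxKey_lt_iff s hij (by omega)).2 hi),
    fun ⟨hki, hi⟩ => lt_asymm hki ((minMaxKey_lt_iff s (hij.trans hjk) (by omega)).2 hi)⟩

end MinMax

section Avoiders213231

variable {π : Equiv.Perm (Fin (m + 1))}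

lemma entry_lt_of_avoids_213_231 (hA : AvoidsAll (permWord π) [[2, 1, 3], [2, 3, 1]])
    {i j k : ℕ} (hij : i < j) (hik : i < k) (hj : j ≤ m) (hk : k ≤ m)
    (h : entry π i < entry π j) : entry π i < entry π k := by
  rw [avoidsAll_213_231_iff] at hA
  have := entry_ne_entry π (by omega) (by omega) hik.ne
  rcases lt_trichotomy j k with hjk | rfl | hkj
  · have := (hA i j k hij hjk (by omega)).2
    omega
  · exact h
  · have := (hA i k j hik hkj (by omega)).1
    omega

lemma entry_lt_entry_iff_of_avoids_213_231 (hA : AvoidsAll (permWord π) [[2, 1, 3], [2, 3, 1]])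
    {i j : ℕ} (hij : i < j) (hj : j ≤ m) :
    entry π i < entry π j ↔ bitAt (descentWord π) i = false := by
  rw [bitAt_descentWord_eq_false π (by omega)]
  exact ⟨entry_lt_of_avoids_213_231 hA hij (by omega) hj (by omega),
    entry_lt_of_avoids_213_231 hA (by omega) hij (by omega) hj⟩

lemma realizes_minMaxKey_of_avoids (hA : AvoidsAll (permWord π) [[2, 1, 3], [2, 3, 1]]) :
    Realizes π (minMaxKey (descentWord π)) :=
  realizes_of_lt (minMaxKey_injOn _) fun i j hij hj => by
    rw [entry_lt_entry_iff_of_avoids_213_231 hA hij (by omega),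
      minMaxKey_lt_iff _ hij (by omega)]

end Avoiders213231

theorem acount_avoiding_132_213 (m k : ℕ) :
    acount (m + 1) k dascents [[1, 3, 2], [2, 1, 3]] = binCount m k ∧
    acount (m + 1) k ddescents [[1, 3, 2], [2, 1, 3]] = binCount m k :=
  acount_eq_binCount_of_realizes _ reverseLayeredKey reverseLayeredKey_injOn
    reverseLayeredKey_succ_lt_iff (fun s _ => avoidsAll_of_realizes_reverseLayeredKey s)
    (fun _ => realizes_reverseLayeredKey_of_avoids) k

theorem acount_avoiding_213_231 (m k : ℕ) :
    acount (m + 1) k dascents [[2, 1, 3], [2, 3, 1]] = binCount m k ∧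
    acount (m + 1) k ddescents [[2, 1, 3], [2, 3, 1]] = binCount m k :=
  acount_eq_binCount_of_realizes _ minMaxKey minMaxKey_injOn
    minMaxKey_succ_lt_iff (fun s _ => avoidsAll_of_realizes_minMaxKey s)
    (fun _ => realizes_minMaxKey_of_avoids) k

end PatternAvoidance

theorem stmt10 (n k : ℕ) (hn : 1 ≤ n) :
    acount n k dascents [[1,3,2],[2,1,3]] = binCount (n - 1) k ∧
    acount n k ddescents [[1,3,2],[2,1,3]] = binCount (n - 1) k ∧
    acount n k dascents [[2,1,3],[2,3,1]] = binCount (n - 1) k ∧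
    acount n k ddescents [[2,1,3],[2,3,1]] = binCount (n - 1) k := by
  obtain ⟨m, rfl⟩ : ∃ m, n = m + 1 := ⟨n - 1, by omega⟩
  obtain ⟨h₁, h₂⟩ := PatternAvoidance.acount_avoiding_132_213 m k
  obtain ⟨h₃, h₄⟩ := PatternAvoidance.acount_avoiding_213_231 m k
  exact ⟨h₁, h₂, h₃, h₄⟩
end
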